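/- arXiv:1307.1529 — 9 statements merged into one kernel-verified Lean document; each statement's English description precedes it below -/
import Mathlib

section
/- Let n ≥ 3 and let z ∈ ℝⁿ be a unit vector. There exist finite sets A, A' ⊆ ℝⁿ such that, setting K = conv(A) and K' = conv(A'), both K and K' have nonempty interior, K is symmetric about the origin (K = −K), K' is not a translate of K (for every t ∈ ℝⁿ, K' ≠ K + t), and for every x ∈ ℝⁿ one has w(K ∩ (K + x), z) = w(K' ∩ (K' + x), z). (Theorem 1.4: a centrally symmetric convex polytope need not be determined by its width-covariogram in dimension n ≥ 3.) -/
open MeasureTheory Set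
open scoped Pointwise

noncomputable def w {E : Type*} [NormedAddCommGroup E] [InnerProductSpace ℝ E]
    (A : Set E) (z : E) : ℝ :=
  sSup ((fun a => (inner ℝ a z : ℝ)) '' A) - sInf ((fun a => (inner ℝ a z : ℝ)) '' A)

/-!
Pick orthonormal `u₀, u₁ ⟂ z`, let `V = span {u₀, u₁}`, let `T = conv {0, u₀, u₁}` and let `P` be
a symmetric polytope spanning `Vᗮ`. Take `K = P + (T - T)` and `K' = P + 2T`; `K` is symmetric.
Writing `x = x_W + x_V` along `Vᗮ ⊕ V`, the set `L ∩ (L + x)` for `L = P + Q` (`Q ⊆ V`) is the sum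
of `P ∩ (P + x_W)` and `Q ∩ (Q + x_V)`. The second summand does not change the width in direction
`z ⟂ V`, and it is empty exactly when `x_V ∉ Q - Q`. Since `T - T` is symmetric and convex,
`(T - T) - (T - T) = 2(T - T) = 2T - 2T`, so `K` and `K'` have the same width covariogram.
But `K'` is not a translate of `K`: its image under `y ↦ (⟪u₀, y⟫, ⟪u₁, y⟫)` is the triangle
`conv {0, 2e₀, 2e₁}`, which is not centrally symmetric.
-/

open Submodule
open scoped RealInnerProductSpace

section AddCommGroup

variable {E : Type*} [AddCommGroup E]

lemma inter_image_add_right_nonempty_iff (Q : Set E) (y : E) :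
    (Q ∩ (· + y) '' Q).Nonempty ↔ y ∈ Q - Q := by
  constructor
  · rintro ⟨a, ha, b, hb, rfl⟩
    exact ⟨b + y, ha, b, hb, add_sub_cancel_left b y⟩
  · rintro ⟨a, ha, b, hb, rfl⟩
    exact ⟨a, ha, b, hb, add_sub_cancel b a⟩

lemma sub_mem_image_add_right_of_neg_eq {C : Set E} (hC : -C = C) {t y : E}
    (hy : y ∈ (· + t) '' C) : (t + t) - y ∈ (· + t) '' C := by
  obtain ⟨k, hk, rfl⟩ := hy
  refine ⟨-k, ?_, by dsimp only; abel⟩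
  rwa [← hC, Set.neg_mem_neg]

/-- A translate of a centrally symmetric set is centrally symmetric; a set containing the vertices
of a triangle and contained in it is not. -/
lemma image_add_right_ne_of_neg_eq {C T : Set E} (hC : -C = C) (f g : E →+ ℝ) {c : ℝ}
    (hc : 0 < c) (hT : ∀ y ∈ T, 0 ≤ f y ∧ 0 ≤ g y ∧ f y + g y ≤ c) {u v : E} (h0 : 0 ∈ T)
    (hu : u ∈ T) (hv : v ∈ T) (hfu : f u = c) (hgv : g v = c) (t : E) :
    T ≠ (· + t) '' C := by
  rintro rfl
  have h₀ := hT _ (sub_mem_image_add_right_of_neg_eq hC h0)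
  have h₁ := hT _ (sub_mem_image_add_right_of_neg_eq hC hu)
  have h₂ := hT _ (sub_mem_image_add_right_of_neg_eq hC hv)
  simp only [map_sub, sub_zero] at h₀ h₁ h₂
  linarith [h₁.1, h₂.2.1, h₀.2.2]

variable {R : Type*} [Ring R] [Module R E]

lemma add_inter_image_add_right_add {V W : Submodule R E} (hVW : Disjoint V W) {P Q : Set E}
    (hP : P ⊆ W) (hQ : Q ⊆ V) {xW xV : E} (hxW : xW ∈ W) (hxV : xV ∈ V) :
    (P + Q) ∩ (· + (xW + xV)) '' (P + Q) = (P ∩ (· + xW) '' P) + (Q ∩ (· + xV) '' Q) := by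
  ext k
  constructor
  · rintro ⟨⟨p, hp, q, hq, rfl⟩, _, ⟨p', hp', q', hq', rfl⟩, hk⟩
    have hd : p - (p' + xW) = (q' + xV) - q := by
      dsimp only at hk
      linear_combination (norm := module) -hk
    have hdW : p - (p' + xW) ∈ W := W.sub_mem (hP hp) (W.add_mem (hP hp') hxW)
    have hdV : p - (p' + xW) ∈ V := hd ▸ V.sub_mem (V.add_mem (hQ hq') hxV) (hQ hq)
    have hd0 : p - (p' + xW) = 0 := Submodule.disjoint_def.mp hVW _ hdV hdW
    refine ⟨p, ⟨hp, p', hp', (sub_eq_zero.mp hd0).symm⟩, q, ⟨hq, q', hq', ?_⟩, rfl⟩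
    exact sub_eq_zero.mp (hd ▸ hd0)
  · rintro ⟨p, ⟨hp, p', hp', rfl⟩, q, ⟨hq, q', hq', rfl⟩, rfl⟩
    exact ⟨⟨_, hp, _, hq, rfl⟩, p' + q', ⟨p', hp', q', hq', rfl⟩, by dsimp only; abel⟩

lemma span_add_of_zero_mem {X Y : Set E} (hX : (0 : E) ∈ X) (hY : (0 : E) ∈ Y) :
    span R (X + Y) = span R X ⊔ span R Y := by
  refine le_antisymm (span_le.mpr ?_) (sup_le (span_mono ?_) (span_mono ?_))
  · rintro _ ⟨x, hx, y, hy, rfl⟩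
    exact add_mem (mem_sup_left (subset_span hx)) (mem_sup_right (subset_span hy))
  · exact fun x hx => ⟨x, hx, 0, hY, add_zero x⟩
  · exact fun y hy => ⟨0, hX, y, hy, zero_add y⟩

lemma span_sub_self_of_zero_mem {S : Set E} (hS : (0 : E) ∈ S) : span R (S - S) = span R S := by
  rw [sub_eq_add_neg, span_add_of_zero_mem hS (by simpa using hS), span_neg, sup_idem]

lemma Submodule.FG.exists_finite_symmetric_span_eq {W : Submodule R E} (hW : W.FG) :
    ∃ P : Set E, P.Finite ∧ (0 : E) ∈ P ∧ -P = P ∧ span R P = W := by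
  obtain ⟨s, rfl⟩ := hW
  refine ⟨insert 0 (↑s ∪ -↑s), ((s.finite_toSet.union s.finite_toSet.neg).insert 0),
    mem_insert 0 _, ?_, ?_⟩
  · rw [neg_insert, union_neg, neg_neg, neg_zero, union_comm]
  · rw [span_insert_zero, span_union, span_neg, sup_idem]

end AddCommGroup

lemma Convex.sub_self_sub_sub_self {E : Type*} [AddCommGroup E] [Module ℝ E] {C : Set E}
    (hC : Convex ℝ C) : (C - C) - (C - C) = (2 : ℝ) • C - (2 : ℝ) • C := by
  calc (C - C) - (C - C) = (C - C) + (C - C) := by rw [sub_eq_add_neg _ (C - C), neg_sub]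
    _ = ((1 : ℝ) + 1) • (C - C) := by
      rw [(hC.sub hC).add_smul zero_le_one zero_le_one, one_smul]
    _ = (2 : ℝ) • C - (2 : ℝ) • C := by
      rw [one_add_one_eq_two, sub_eq_add_neg, sub_eq_add_neg, smul_add, smul_set_neg]

section InnerProductSpace

variable {E : Type*} [NormedAddCommGroup E] [InnerProductSpace ℝ E]

lemma interior_convexHull_add_nonempty [FiniteDimensional ℝ E] {P Q : Set E}
    (hP0 : (0 : E) ∈ P) (hQ0 : (0 : E) ∈ Q) (hPQ : span ℝ P = (span ℝ Q)ᗮ) :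
    (interior (convexHull ℝ (P + Q))).Nonempty := by
  have h0 : (0 : E) ∈ P + Q := ⟨0, hP0, 0, hQ0, add_zero 0⟩
  rw [interior_convexHull_nonempty_iff_affineSpan_eq_top,
    AffineSubspace.affineSpan_eq_top_iff_vectorSpan_eq_top_of_nonempty ℝ _ _ ⟨0, h0⟩,
    vectorSpan_eq_span_vsub_set_right ℝ h0]
  simpa [span_add_of_zero_mem hP0 hQ0, hPQ, sup_comm] using
    (sup_orthogonal_of_hasOrthogonalProjection (K := span ℝ Q))

lemma exists_orthonormal_pair_orthogonal [FiniteDimensional ℝ E] (hE : 3 ≤ Module.finrank ℝ E)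
    (z : E) : ∃ u : Fin 2 → E, Orthonormal ℝ u ∧ ∀ i, ⟪z, u i⟫ = 0 := by
  have hdim : 2 ≤ Module.finrank ℝ (ℝ ∙ z)ᗮ := by
    have := (ℝ ∙ z).finrank_add_finrank_orthogonal
    have := finrank_span_le_card (R := ℝ) ({z} : Set E)
    rw [toFinset_singleton, Finset.card_singleton] at this
    omega
  let b := stdOrthonormalBasis ℝ (ℝ ∙ z)ᗮ
  refine ⟨(ℝ ∙ z)ᗮ.subtypeₗᵢ ∘ b ∘ Fin.castLE hdim,
    (b.orthonormal.comp _ (Fin.castLE_injective hdim)).comp_linearIsometry _, fun i => ?_⟩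
  exact mem_orthogonal_singleton_iff_inner_right.mp (b _).2

noncomputable def widthCovariogram (K : Set E) (z x : E) : ℝ :=
  w (K ∩ (· + x) '' K) z

lemma w_add_of_inner_eq_zero {X Y : Set E} {z : E} (hY : Y.Nonempty)
    (hYz : ∀ y ∈ Y, ⟪y, z⟫ = 0) : w (X + Y) z = w X z := by
  suffices (fun a => ⟪a, z⟫) '' (X + Y) = (fun a => ⟪a, z⟫) '' X by
    simp only [w, this]
  obtain ⟨y₀, hy₀⟩ := hY
  ext r
  constructor
  · rintro ⟨_, ⟨a, ha, b, hb, rfl⟩, rfl⟩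
    exact ⟨a, ha, by simp only [inner_add_left, hYz b hb, add_zero]⟩
  · rintro ⟨a, ha, rfl⟩
    exact ⟨a + y₀, ⟨a, ha, y₀, hy₀, rfl⟩, by simp only [inner_add_left, hYz y₀ hy₀, add_zero]⟩

lemma widthCovariogram_add_eq_of_sub_eq {V W : Submodule ℝ E} (hVW : IsCompl V W) {z : E}
    (hz : z ∈ Vᗮ) {P Q Q' : Set E} (hP : P ⊆ W) (hQ : Q ⊆ V) (hQ' : Q' ⊆ V)
    (hdiff : Q - Q = Q' - Q') (x : E) :
    widthCovariogram (P + Q) z x = widthCovariogram (P + Q') z x := by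
  obtain ⟨xW, hxW, xV, hxV, rfl⟩ := mem_sup.mp (hVW.symm.sup_eq_top ▸ mem_top : x ∈ W ⊔ V)
  have hzero : ∀ y ∈ V, ⟪y, z⟫ = 0 := fun y hy => inner_right_of_mem_orthogonal hy hz
  simp only [widthCovariogram, add_inter_image_add_right_add hVW.disjoint hP hQ hxW hxV,
    add_inter_image_add_right_add hVW.disjoint hP hQ' hxW hxV]
  have hne_iff : (Q ∩ (· + xV) '' Q).Nonempty ↔ (Q' ∩ (· + xV) '' Q').Nonempty := by
    rw [inter_image_add_right_nonempty_iff, hdiff, inter_image_add_right_nonempty_iff]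
  by_cases hne : (Q ∩ (· + xV) '' Q).Nonempty
  · rw [w_add_of_inner_eq_zero hne fun y hy => hzero y (hQ hy.1),
      w_add_of_inner_eq_zero (hne_iff.mp hne) fun y hy => hzero y (hQ' hy.1)]
  · rw [not_nonempty_iff_eq_empty.mp hne, not_nonempty_iff_eq_empty.mp (hne_iff.not.mp hne),
      add_empty]

lemma widthCovariogram_convexHull_add_sub_self_eq {V W : Submodule ℝ E} (hVW : IsCompl V W)
    {z : E} (hz : z ∈ Vᗮ) {P S : Set E} (hP : P ⊆ W) (hS : S ⊆ V) (x : E) :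
    widthCovariogram (convexHull ℝ (P + (S - S))) z x =
      widthCovariogram (convexHull ℝ (P + (2 : ℝ) • S)) z x := by
  have hV : ∀ Q ⊆ (V : Set E), convexHull ℝ Q ⊆ V := fun Q hQ => convexHull_min hQ V.convex
  rw [convexHull_add, convexHull_add]
  refine widthCovariogram_add_eq_of_sub_eq hVW hz (convexHull_min hP W.convex) (hV _ ?_)
    (hV _ ?_) ?_ x
  · rintro _ ⟨a, ha, b, hb, rfl⟩
    exact V.sub_mem (hS ha) (hS hb)
  · rintro _ ⟨a, ha, rfl⟩
    exact V.smul_mem 2 (hS ha)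
  · rw [convexHull_sub, convexHull_smul]
    exact (convex_convexHull ℝ S).sub_self_sub_sub_self

lemma inner_bounds_of_mem_convexHull_add_two_smul {u : Fin 2 → E} {P : Set E} (hu : Orthonormal ℝ u)
    (hP : P ⊆ (span ℝ {0, u 0, u 1})ᗮ) {y : E}
    (hy : y ∈ convexHull ℝ (P + (2 : ℝ) • {0, u 0, u 1})) :
    0 ≤ ⟪u 0, y⟫ ∧ 0 ≤ ⟪u 1, y⟫ ∧ ⟪u 0, y⟫ + ⟪u 1, y⟫ ≤ 2 := by
  have hlin : ∀ v : E, IsLinearMap ℝ (⟪v, ·⟫) := fun v =>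
    ⟨inner_add_right v, fun c y => real_inner_smul_right v y c⟩
  refine convexHull_min ?_ ((convex_halfSpace_ge (hlin (u 0)) 0).inter
    ((convex_halfSpace_ge (hlin (u 1)) 0).inter
      (convex_halfSpace_le ((hlin (u 0)).mk' + (hlin (u 1)).mk').isLinear 2))) hy
  rintro _ ⟨p, hp, _, ⟨s, hs, rfl⟩, rfl⟩
  have hpu : ∀ i, ⟪u i, p⟫ = 0 := fun i =>
    inner_right_of_mem_orthogonal (subset_span (by fin_cases i <;> simp)) (hP hp)
  have h01 : ⟪u 0, u 1⟫ = 0 := hu.2 (by decide)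
  have h10 : ⟪u 1, u 0⟫ = 0 := hu.2 (by decide)
  have hnorm : ∀ i, ⟪u i, u i⟫ = 1 := fun i => by
    rw [real_inner_self_eq_norm_sq, hu.1 i, one_pow]
  simp only [mem_inter_iff, mem_ofPred_eq, LinearMap.add_apply, IsLinearMap.mk'_apply]
  rcases hs with rfl | rfl | rfl <;>
    simp only [inner_add_right, real_inner_smul_right, inner_zero_right, hpu, h01, h10, hnorm] <;>
    norm_num

lemma convexHull_add_two_smul_ne_image_add_right {u : Fin 2 → E} {P : Set E} (hu : Orthonormal ℝ u)
    (hP : P ⊆ (span ℝ {0, u 0, u 1})ᗮ) (hP0 : (0 : E) ∈ P) {C : Set E} (hC : -C = C) (t : E) :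
    convexHull ℝ (P + (2 : ℝ) • {0, u 0, u 1}) ≠ (· + t) '' C := by
  have hmem : ∀ v ∈ ({0, u 0, u 1} : Set E),
      (2 : ℝ) • v ∈ convexHull ℝ (P + (2 : ℝ) • {0, u 0, u 1}) := fun v hv =>
    subset_convexHull ℝ _ ⟨0, hP0, _, smul_mem_smul_set hv, zero_add _⟩
  have htwo : ∀ i, ⟪u i, (2 : ℝ) • u i⟫ = 2 := fun i => by
    rw [real_inner_smul_right, real_inner_self_eq_norm_sq, hu.1 i]; norm_num
  exact image_add_right_ne_of_neg_eq hC (innerₗ E (u 0)).toAddMonoidHom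
    (innerₗ E (u 1)).toAddMonoidHom two_pos
    (fun y hy => inner_bounds_of_mem_convexHull_add_two_smul hu hP hy)
    (by simpa using hmem 0 (by simp)) (hmem _ (by simp)) (hmem _ (by simp)) (htwo 0) (htwo 1) t

end InnerProductSpace

theorem exists_centrally_symmetric_polytope_not_determined_by_width_covariogram_general
    (n : ℕ) (hn : 3 ≤ n) (z : EuclideanSpace ℝ (Fin n)) :
    ∃ A A' : Set (EuclideanSpace ℝ (Fin n)), A.Finite ∧ A'.Finite ∧
      (interior (convexHull ℝ A)).Nonempty ∧
      (interior (convexHull ℝ A')).Nonempty ∧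
      convexHull ℝ A = -(convexHull ℝ A) ∧
      (∀ t : EuclideanSpace ℝ (Fin n), convexHull ℝ A' ≠ (· + t) '' (convexHull ℝ A)) ∧
      ∀ x : EuclideanSpace ℝ (Fin n),
        w (convexHull ℝ A ∩ ((· + x) '' (convexHull ℝ A))) z
          = w (convexHull ℝ A' ∩ ((· + x) '' (convexHull ℝ A'))) z := by
  obtain ⟨u, hu, huz⟩ := exists_orthonormal_pair_orthogonal (by simpa using hn) z
  set S : Set (EuclideanSpace ℝ (Fin n)) := {0, u 0, u 1}
  have hS0 : (0 : EuclideanSpace ℝ (Fin n)) ∈ S := mem_insert 0 _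
  have hz : z ∈ (span ℝ S)ᗮ :=
    (isOrtho_span.mpr (by rintro _ rfl _ (rfl | rfl | rfl) <;> simp [huz]) :
      span ℝ {z} ⟂ span ℝ S) (mem_span_singleton_self z)
  obtain ⟨P, hPfin, hP0, hPneg, hPspan⟩ :=
    (IsNoetherian.noetherian (span ℝ S)ᗮ).exists_finite_symmetric_span_eq
  have hP : P ⊆ (span ℝ S)ᗮ := hPspan ▸ subset_span
  have hsymm : -convexHull ℝ (P + (S - S)) = convexHull ℝ (P + (S - S)) := by
    rw [← convexHull_neg, neg_add, hPneg, neg_sub]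
  refine ⟨P + (S - S), P + (2 : ℝ) • S, hPfin.add ((toFinite S).sub (toFinite S)),
    hPfin.add (toFinite S).smul_set, ?_, ?_, hsymm.symm,
    convexHull_add_two_smul_ne_image_add_right hu hP hP0 hsymm,
    widthCovariogram_convexHull_add_sub_self_eq (isCompl_orthogonal _) hz hP subset_span⟩
  · exact interior_convexHull_add_nonempty hP0 ⟨0, hS0, 0, hS0, sub_zero 0⟩
      (by rw [span_sub_self_of_zero_mem hS0, hPspan])
  · exact interior_convexHull_add_nonempty hP0 ⟨0, hS0, smul_zero _⟩
      (by rw [span_smul_eq_of_isUnit S 2 (isUnit_iff_ne_zero.mpr two_ne_zero), hPspan])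

/-- In every dimension `n ≥ 3` there is an origin-symmetric convex polytope `K = conv A`
and a convex polytope `K' = conv A'` which is not a translate of `K` but has the same
width-covariogram in direction `z`. -/
theorem exists_centrally_symmetric_polytope_not_determined_by_width_covariogram
    (n : ℕ) (hn : 3 ≤ n) (z : EuclideanSpace ℝ (Fin n)) (hz : ‖z‖ = 1) :
    ∃ A A' : Set (EuclideanSpace ℝ (Fin n)), A.Finite ∧ A'.Finite ∧
      (interior (convexHull ℝ A)).Nonempty ∧
      (interior (convexHull ℝ A')).Nonempty ∧
      convexHull ℝ A = -(convexHull ℝ A) ∧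
      (∀ t : EuclideanSpace ℝ (Fin n), convexHull ℝ A' ≠ (· + t) '' (convexHull ℝ A)) ∧
      ∀ x : EuclideanSpace ℝ (Fin n),
        w (convexHull ℝ A ∩ ((· + x) '' (convexHull ℝ A))) z
          = w (convexHull ℝ A' ∩ ((· + x) '' (convexHull ℝ A'))) z :=
  exists_centrally_symmetric_polytope_not_determined_by_width_covariogram_general n hn z
end

section
/- Let K be a convex body in ℝ². Then for Lebesgue-almost every x ∈ ℝ² one has per(K ∩ (K + x)) = μH¹(K ∩ (frontier K + x)) + μH¹(K ∩ (frontier K + (−x))), where μH¹ denotes one-dimensional Hausdorff measure. (Theorem 3.1(I) for the Euclidean perimeter: almost everywhere, the perimeter-covariogram of K equals the sum of the lengths of the two chords of K obtained by translating the boundary by ±x.) -/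
open MeasureTheory Set
open scoped Pointwise

/-- Euclidean perimeter of a planar set: one-dimensional Hausdorff measure of its frontier. -/
noncomputable def per (A : Set (EuclideanSpace ℝ (Fin 2))) : ℝ :=
  (μH[1] (frontier A)).toReal

/-!
Because `K` and `K + x` are closed, `∂(K ∩ (K + x))` lies in `(K ∩ ∂(K + x)) ∪ (∂K ∩ (K + x))`
and contains the disjoint union of `int K ∩ ∂(K + x)` and `∂K ∩ int (K + x)`; these bounds differ
only by the overlap `∂K ∩ (∂K + x)`. The overlap is `μH¹`-null for almost every `x` by Fubini,
since `∂K` is Lebesgue-null and has finite length. The length is finite because the metric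
projection onto `K` is 1-Lipschitz and maps a large circle onto `∂K`: each boundary point is the
projection of the point where its outward normal ray meets the circle. Translating the second
chord by `-x` gives the formula.
-/

open Metric
open scoped RealInnerProductSpace ENNReal

section MetricProjection

variable {F : Type*} [NormedAddCommGroup F] [InnerProductSpace ℝ F]

theorem norm_sub_le_of_inner_sub_nonpos {x y z w : F} (hz : ⟪x - z, w - z⟫ ≤ 0)
    (hw : ⟪y - w, z - w⟫ ≤ 0) : ‖z - w‖ ≤ ‖x - y‖ := by
  have key : ‖z - w‖ ^ 2 ≤ ⟪x - y, z - w⟫ := by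
    have : ⟪x - y, z - w⟫ - ‖z - w‖ ^ 2 = -⟪x - z, w - z⟫ - ⟪y - w, z - w⟫ := by
      rw [← real_inner_self_eq_norm_sq, ← inner_sub_left, ← inner_neg_right, neg_sub,
        ← inner_sub_left]
      congr 1
      abel
    linarith
  nlinarith [real_inner_le_norm (x - y) (z - w), norm_nonneg (z - w), norm_nonneg (x - y)]

theorem Convex.exists_lipschitzWith_one_projection {K : Set F} (hcv : Convex ℝ K)
    (hne : K.Nonempty) (hK : IsComplete K) :
    ∃ f : F → F, LipschitzWith 1 f ∧
      ∀ x, ∀ z ∈ K, (∀ w ∈ K, ⟪x - z, w - z⟫ ≤ 0) → f x = z := by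
  choose f hfK hfmin using exists_norm_eq_iInf_of_complete_convex hne hK hcv
  have hvar x : ∀ w ∈ K, ⟪x - f x, w - f x⟫ ≤ 0 :=
    (norm_eq_iInf_iff_real_inner_le_zero hcv (hfK x)).1 (hfmin x)
  refine ⟨f, LipschitzWith.of_dist_le_mul fun x y => ?_, fun x z hz hxz => ?_⟩
  · simpa [dist_eq_norm] using
      norm_sub_le_of_inner_sub_nonpos (hvar x (f y) (hfK y)) (hvar y (f x) (hfK x))
  · simpa [sub_eq_zero] using norm_sub_le_of_inner_sub_nonpos (hvar x z hz) (hxz (f x) (hfK x))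

theorem Convex.exists_inner_sub_nonpos_of_notMem_interior [CompleteSpace F] {K : Set F}
    (hcv : Convex ℝ K) (hint : (interior K).Nonempty) {z : F} (hz : z ∉ interior K) :
    ∃ u ≠ 0, ∀ w ∈ K, ⟪u, w - z⟫ ≤ 0 := by
  obtain ⟨g, hg⟩ := geometric_hahn_banach_open_point hcv.interior isOpen_interior hz
  set u := (InnerProductSpace.toDual ℝ F).symm g
  have hu x : ⟪u, x⟫ = g x := InnerProductSpace.toDual_symm_apply
  have hle : K ⊆ {x | g x ≤ g z} := by
    calc K ⊆ closure (interior K) := by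
          rw [hcv.closure_interior_eq_closure_of_nonempty_interior hint]; exact subset_closure
      _ ⊆ {x | g x ≤ g z} := (isClosed_le g.continuous continuous_const).closure_subset_iff.mpr
          fun a ha => (hg a ha).le
  refine ⟨u, fun hu0 => ?_, fun w hw => ?_⟩
  · obtain ⟨a, ha⟩ := hint
    simpa [← hu, hu0] using hg a ha
  · simpa [inner_sub_right, hu] using hle hw

theorem exists_nonneg_add_smul_mem_sphere {z u : F} {R : ℝ} (hu : u ≠ 0) (hz : ‖z‖ ≤ R) :
    ∃ t : ℝ, 0 ≤ t ∧ z + t • u ∈ sphere 0 R := by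
  have hR : 0 ≤ R := (norm_nonneg z).trans hz
  have hu' : 0 < ‖u‖ := norm_pos_iff.mpr hu
  set T := 2 * R / ‖u‖
  have hT : 0 ≤ T := by positivity
  have hfar : R ≤ ‖z + T • u‖ := by
    have : ‖T • u‖ = 2 * R := by
      rw [norm_smul, Real.norm_of_nonneg hT, div_mul_cancel₀ _ hu'.ne']
    have h := norm_sub_norm_le (T • u) (-z)
    rw [norm_neg, sub_neg_eq_add, add_comm] at h
    linarith
  obtain ⟨t, ht, hzt⟩ := intermediate_value_Icc hT
    (f := fun t : ℝ => ‖z + t • u‖) (by fun_prop) ⟨by simpa using hz, hfar⟩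
  exact ⟨t, ht.1, by simpa using hzt⟩

theorem Convex.frontier_subset_image_sphere [CompleteSpace F] {K : Set F} (hcv : Convex ℝ K)
    (hcl : IsClosed K) (hint : (interior K).Nonempty) {R : ℝ} (hR : K ⊆ closedBall 0 R)
    {f : F → F} (hf : ∀ x, ∀ z ∈ K, (∀ w ∈ K, ⟪x - z, w - z⟫ ≤ 0) → f x = z) :
    frontier K ⊆ f '' sphere (0 : F) R := by
  intro z hz
  have hzK : z ∈ K := hcl.frontier_subset hz
  obtain ⟨u, hu, hKu⟩ := hcv.exists_inner_sub_nonpos_of_notMem_interior hint hz.2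
  obtain ⟨t, ht, hzt⟩ :=
    exists_nonneg_add_smul_mem_sphere hu (mem_closedBall_zero_iff.mp (hR hzK))
  refine ⟨z + t • u, hzt, hf _ z hzK fun w hw => ?_⟩
  rw [add_sub_cancel_left, real_inner_smul_left]
  exact mul_nonpos_of_nonneg_of_nonpos ht (hKu w hw)

theorem Convex.exists_hausdorffMeasure_frontier_le_sphere [CompleteSpace F] [MeasurableSpace F]
    [BorelSpace F] {K : Set F} (hcv : Convex ℝ K) (hcp : IsCompact K)
    (hint : (interior K).Nonempty) {d : ℝ} (hd : 0 ≤ d) :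
    ∃ R, μH[d] (frontier K) ≤ μH[d] (sphere (0 : F) R) := by
  obtain ⟨f, hlip, hf⟩ :=
    hcv.exists_lipschitzWith_one_projection (hint.mono interior_subset) hcp.isComplete
  obtain ⟨R, hR⟩ := hcp.isBounded.subset_closedBall 0
  refine ⟨R, ?_⟩
  calc μH[d] (frontier K) ≤ μH[d] (f '' sphere (0 : F) R) :=
        measure_mono (hcv.frontier_subset_image_sphere hcp.isClosed hint hR hf)
    _ ≤ μH[d] (sphere (0 : F) R) := by
        simpa using hlip.hausdorffMeasure_image_le hd (sphere 0 R)

end MetricProjection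

theorem Complex.hausdorffMeasure_one_sphere_lt_top (c : ℂ) (R : ℝ) :
    μH[1] (sphere c R) < ∞ := by
  rcases lt_or_ge R 0 with hR | hR
  · simp [sphere_eq_empty_of_neg hR]
  calc μH[1] (sphere c R) = μH[1] (circleMap c R '' Ioc 0 (2 * Real.pi)) := by
        rw [image_circleMap_Ioc, abs_of_nonneg hR]
    _ ≤ (Real.nnabs R : ℝ≥0∞) ^ (1 : ℝ) * μH[1] (Ioc 0 (2 * Real.pi)) :=
        (lipschitzWith_circleMap c R).hausdorffMeasure_image_le zero_le_one _
    _ < ∞ := by simp [hausdorffMeasure_real, ENNReal.mul_lt_top]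

theorem EuclideanSpace.hausdorffMeasure_one_sphere_lt_top (R : ℝ) :
    μH[1] (sphere (0 : EuclideanSpace ℝ (Fin 2)) R) < ∞ := by
  rw [← Complex.orthonormalBasisOneI.repr.toIsometryEquiv.hausdorffMeasure_preimage]
  simpa using Complex.hausdorffMeasure_one_sphere_lt_top 0 R

theorem ae_measure_image_add_right_eq_zero {G : Type*} [MeasurableSpace G] [AddGroup G]
    [MeasurableAdd₂ G] [MeasurableNeg G] (μ ν : Measure G) [SFinite μ] [SFinite ν]
    [μ.IsAddLeftInvariant] [μ.IsNegInvariant] {T : Set G} (hT : MeasurableSet T)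
    (hμT : μ T = 0) : ∀ᵐ x ∂μ, ν ((· + x) '' T) = 0 := by
  set s : Set (G × G) := {p | p.2 - p.1 ∈ T}
  have hs : MeasurableSet s := hT.preimage (measurable_snd.sub measurable_fst)
  have hprod : μ.prod ν s = 0 := by
    have hslice y : μ ((fun x => (x, y)) ⁻¹' s) = 0 :=
      ((Measure.measurePreserving_sub_left μ y).measure_preimage hT.nullMeasurableSet).trans hμT
    simp [Measure.prod_apply_symm hs, hslice]
  filter_upwards [Measure.measure_ae_null_of_prod_null hprod] with x hx
  have hslice : Prod.mk x ⁻¹' s = (· + -x) ⁻¹' T := by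
    ext y
    simp [s, sub_eq_add_neg]
  rwa [image_add_right, ← hslice]

theorem measure_closure_inter_frontier_eq {X : Type*} [TopologicalSpace X] [MeasurableSpace X]
    (μ : Measure X) {A B : Set X} (h : μ (frontier A ∩ frontier B) = 0) :
    μ (closure A ∩ frontier B) = μ (interior A ∩ frontier B) := by
  rw [closure_eq_interior_union_frontier, union_inter_distrib_right]
  exact measure_congr (union_ae_eq_left_of_ae_eq_empty (ae_eq_empty.mpr h))

theorem measure_frontier_inter_eq_add {X : Type*} [TopologicalSpace X] [MeasurableSpace X]
    [OpensMeasurableSpace X] (μ : Measure X) {A B : Set X}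
    (h : μ (frontier A ∩ frontier B) = 0) :
    μ (frontier (A ∩ B)) = μ (closure A ∩ frontier B) + μ (frontier A ∩ closure B) := by
  have hB : μ (frontier A ∩ closure B) = μ (frontier A ∩ interior B) := by
    rw [inter_comm, measure_closure_inter_frontier_eq μ (by rwa [inter_comm]), inter_comm]
  rw [measure_closure_inter_frontier_eq μ h, hB]
  refine le_antisymm ?_ ?_
  · calc μ (frontier (A ∩ B)) ≤ μ (frontier A ∩ closure B ∪ closure A ∩ frontier B) :=
          measure_mono (frontier_inter_subset A B)
      _ ≤ μ (interior A ∩ frontier B) + μ (frontier A ∩ interior B) := by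
          rw [add_comm, ← measure_closure_inter_frontier_eq μ h, ← hB]
          exact measure_union_le _ _
  · rw [← measure_union (disjoint_left.mpr fun p hA hA' => hA'.1.2 hA.1)
      (isClosed_frontier.measurableSet.inter isOpen_interior.measurableSet)]
    refine measure_mono (union_subset ?_ ?_)
    · rintro p ⟨hA, hB⟩
      refine ⟨closure_mono (inter_subset_inter_left _ interior_subset)
        (isOpen_interior.inter_closure ⟨hA, hB.1⟩),
        fun hAB => hB.2 (interior_mono inter_subset_right hAB)⟩
    · rintro p ⟨hA, hB⟩
      refine ⟨closure_mono (inter_subset_inter_right _ interior_subset)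
        ((isOpen_interior (s := B)).closure_inter ⟨hA.1, hB⟩),
        fun hAB => hA.2 (interior_mono inter_subset_left hAB)⟩

section Translation

variable {E : Type*} [NormedAddCommGroup E] [MeasurableSpace E] [BorelSpace E]

theorem hausdorffMeasure_image_add_right (d : ℝ) (x : E) (s : Set E) :
    μH[d] ((· + x) '' s) = μH[d] s :=
  (IsometryEquiv.addRight x).hausdorffMeasure_image d s

theorem hausdorffMeasure_image_add_right_inter (d : ℝ) (x : E) (A B : Set E) :
    μH[d] ((· + x) '' A ∩ B) = μH[d] (A ∩ (· + -x) '' B) := by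
  rw [← image_inter_preimage, hausdorffMeasure_image_add_right, image_add_right, neg_neg]

end Translation

theorem perimeter_covariogram_eq_sum_chord_lengths_ae_general
    (K : Set (EuclideanSpace ℝ (Fin 2)))
    (hKcp : IsCompact K) (hKcv : Convex ℝ K)
    (hKint : (interior K).Nonempty) :
    ∀ᵐ x ∂(volume : Measure (EuclideanSpace ℝ (Fin 2))),
      per (K ∩ ((· + x) '' K))
        = (μH[1] (K ∩ ((· + x) '' frontier K))).toReal
          + (μH[1] (K ∩ ((· + (-x)) '' frontier K))).toReal := by
  obtain ⟨R, hR⟩ := hKcv.exists_hausdorffMeasure_frontier_le_sphere hKcp hKint zero_le_one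
  have hfin : μH[1] (frontier K) ≠ ∞ :=
    (hR.trans_lt (EuclideanSpace.hausdorffMeasure_one_sphere_lt_top R)).ne
  have := isFiniteMeasure_restrict.mpr hfin
  filter_upwards [ae_measure_image_add_right_eq_zero volume (μH[1].restrict (frontier K))
    isClosed_frontier.measurableSet (hKcv.addHaar_frontier volume)] with x hx
  rw [Measure.restrict_apply' isClosed_frontier.measurableSet, inter_comm] at hx
  have hfr : frontier ((· + x) '' K) = (· + x) '' frontier K :=
    ((Homeomorph.addRight x).image_frontier K).symm
  have hfin₁ : μH[1] (K ∩ (· + x) '' frontier K) ≠ ∞ := by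
    refine ne_top_of_le_ne_top ?_ (measure_mono inter_subset_right)
    rwa [hausdorffMeasure_image_add_right]
  have hfin₂ : μH[1] (frontier K ∩ (· + x) '' K) ≠ ∞ :=
    ne_top_of_le_ne_top hfin (measure_mono inter_subset_left)
  rw [per, measure_frontier_inter_eq_add _ (hfr ▸ hx), hKcp.isClosed.closure_eq,
    (hKcp.image (continuous_add_const x)).isClosed.closure_eq, hfr,
    ENNReal.toReal_add hfin₁ hfin₂, inter_comm (frontier K), hausdorffMeasure_image_add_right_inter]

/-- For Lebesgue-almost every `x`, the perimeter of `K ∩ (K + x)` equals the sum of the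
lengths of the two chords `K ∩ (frontier K + x)` and `K ∩ (frontier K − x)`. -/
theorem perimeter_covariogram_eq_sum_chord_lengths_ae
    (K : Set (EuclideanSpace ℝ (Fin 2)))
    (hKne : K.Nonempty) (hKcp : IsCompact K) (hKcv : Convex ℝ K)
    (hKint : (interior K).Nonempty) :
    ∀ᵐ x ∂(volume : Measure (EuclideanSpace ℝ (Fin 2))),
      per (K ∩ ((· + x) '' K))
        = (μH[1] (K ∩ ((· + x) '' frontier K))).toReal
          + (μH[1] (K ∩ ((· + (-x)) '' frontier K))).toReal :=
  perimeter_covariogram_eq_sum_chord_lengths_ae_general K hKcp hKcv hKint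
end

section
/- Let K be a convex body in ℝ² and α ≥ 0. Then the (lower Lebesgue) integral over ℝ² of the function x ↦ per(K ∩ (K + x)) + α·vol(K ∩ (K + x)) equals vol(K)·(2·per(K) + α·vol(K)), as an identity in the extended nonnegative reals. (Theorem 3.1(II) for the valuation φ = Euclidean perimeter + α·volume.) -/
/-!
For almost every `x` the frontiers of `K` and `K + x` meet in a `μH[1]`-null set, since by Tonelli
`∫ μH[1](∂K ∩ (∂K + x)) dx = μH[1](∂K) · vol(∂K) = 0`. For such `x` the frontier of `K ∩ (K + x)`
is, up to a null set, the disjoint union of `∂K ∩ (K + x)` and `K ∩ (∂K + x) = (∂K ∩ (K - x)) + x`;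
Tonelli again integrates each piece to `μH[1](∂K) · vol K`, and the area term to `vol K ^ 2`.
The perimeter is finite because, once an interior point is moved to `0`, the radial projection
`u ↦ u / gauge K u` of the unit circle onto `∂K` is Lipschitz.
-/

open MeasureTheory Set Metric
open scoped ENNReal NNReal Real Topology

/-- Lebesgue volume of a planar set, as a real number. -/
noncomputable def vol (A : Set (EuclideanSpace ℝ (Fin 2))) : ℝ :=
  (volume A).toReal

section Translates

variable {G : Type*} [MeasurableSpace G] [AddGroup G] [MeasurableAdd₂ G] [MeasurableNeg G]
  (μ ν : Measure G) [SFinite ν] {s : Set G}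

theorem measurable_measure_image_add_right (hs : MeasurableSet s) :
    Measurable fun x => ν ((· + x) '' s) := by
  simp_rw [image_add_right]
  exact (measurable_measure_add_right ν hs).comp measurable_neg

theorem lintegral_measure_image_add_right [SFinite μ] [μ.IsAddLeftInvariant] [μ.IsNegInvariant]
    (hs : MeasurableSet s) : ∫⁻ x, ν ((· + x) '' s) ∂μ = ν univ * μ s := by
  have hmeas : Measurable (Function.uncurry fun x y : G => s.indicator (1 : G → ℝ≥0∞) (y - x)) :=
    (measurable_one.indicator hs).comp (measurable_snd.sub measurable_fst)
  calc ∫⁻ x, ν ((· + x) '' s) ∂μ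
      = ∫⁻ x, ∫⁻ y, s.indicator 1 (y - x) ∂ν ∂μ := by
        refine lintegral_congr fun x => ?_
        simp_rw [image_add_right, ← sub_eq_add_neg]
        rw [← lintegral_indicator_one (measurable_sub_const x hs)]
        rfl
    _ = ∫⁻ y, ∫⁻ x, s.indicator 1 (y - x) ∂μ ∂ν := lintegral_lintegral_swap hmeas.aemeasurable
    _ = ∫⁻ _, μ s ∂ν := by
        refine lintegral_congr fun y => ?_
        rw [← (μ.measurePreserving_sub_left y).measure_preimage hs.nullMeasurableSet,
          ← lintegral_indicator_one (measurable_const_sub y hs)]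
        rfl
    _ = ν univ * μ s := by rw [lintegral_const, mul_comm]

end Translates

theorem IsClosed.frontier_inter {X : Type*} [TopologicalSpace X] {A B : Set X} (hA : IsClosed A)
    (hB : IsClosed B) : frontier (A ∩ B) = frontier A ∩ B ∪ A ∩ frontier B := by
  rw [frontier, interior_inter, (hA.inter hB).closure_eq, hA.frontier_eq, hB.frontier_eq]
  ext
  simp only [mem_sdiff, mem_inter_iff, mem_union]
  tauto

theorem measure_frontier_inter_of_isClosed {X : Type*} [TopologicalSpace X] [MeasurableSpace X]
    [OpensMeasurableSpace X] (μ : Measure X) {A B : Set X} (hA : IsClosed A) (hB : IsClosed B)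
    (h : μ (frontier A ∩ frontier B) = 0) :
    μ (frontier (A ∩ B)) = μ (frontier A ∩ B) + μ (A ∩ frontier B) := by
  rw [hA.frontier_inter hB]
  refine measure_union₀ (hA.inter isClosed_frontier).measurableSet.nullMeasurableSet ?_
  refine measure_mono_null ?_ h
  rintro y ⟨⟨hyA, -⟩, -, hyB⟩
  exact ⟨hyA, hyB⟩

section Hausdorff

variable {E : Type*} [NormedAddCommGroup E] [MeasurableSpace E] [BorelSpace E] {d : ℝ}

theorem hausdorffMeasure_frontier_inter_image_add_right {K : Set E} (hK : IsClosed K) (x : E)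
    (h : μH[d] (frontier K ∩ (· + x) '' frontier K) = 0) :
    μH[d] (frontier (K ∩ (· + x) '' K)) =
      μH[d] ((· + x) '' K ∩ frontier K) + μH[d] ((· + -x) '' K ∩ frontier K) := by
  have hfr : frontier ((· + x) '' K) = (· + x) '' frontier K :=
    ((Homeomorph.addRight x).image_frontier K).symm
  have hKx : IsClosed ((· + x) '' K) := (Homeomorph.addRight x).isClosedMap _ hK
  rw [measure_frontier_inter_of_isClosed _ hK hKx (by rwa [hfr]), hfr, inter_comm (frontier K),
    ← (IsometryEquiv.addRight (-x)).hausdorffMeasure_image _ (K ∩ _),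
    image_inter (IsometryEquiv.addRight (-x)).injective]
  simp [image_image]

theorem ae_hausdorffMeasure_inter_image_add_right_eq_zero [MeasurableAdd₂ E] [MeasurableNeg E]
    (μ : Measure E) [SFinite μ] [μ.IsAddLeftInvariant] [μ.IsNegInvariant] {S : Set E}
    (hS : MeasurableSet S) (hSd : μH[d] S ≠ ∞) (hμS : μ S = 0) :
    ∀ᵐ x ∂μ, μH[d] (S ∩ (· + x) '' S) = 0 := by
  have : IsFiniteMeasure (μH[d].restrict S) := isFiniteMeasure_restrict.2 hSd
  have hint := lintegral_measure_image_add_right μ (μH[d].restrict S) hS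
  rw [hμS, mul_zero, lintegral_eq_zero_iff (measurable_measure_image_add_right _ hS)] at hint
  filter_upwards [hint] with x hx
  rwa [Measure.restrict_apply' hS, inter_comm] at hx

end Hausdorff

section RadialProjection

variable {E : Type*} [NormedAddCommGroup E] [NormedSpace ℝ E] {C : Set E}

theorem Convex.frontier_subset_image_inv_gauge_smul_sphere (hcv : Convex ℝ C) (h₀ : C ∈ 𝓝 0) :
    frontier C ⊆ (fun u => (gauge C u)⁻¹ • u) '' sphere 0 1 := by
  intro y hy
  have hy1 : gauge C y = 1 := (gauge_eq_one_iff_mem_frontier hcv h₀).2 hy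
  have hy0 : ‖y‖ ≠ 0 := by
    rintro h
    rw [norm_eq_zero.1 h, gauge_zero] at hy1
    exact zero_ne_one hy1
  refine ⟨‖y‖⁻¹ • y, by simp [norm_smul, hy0], ?_⟩
  dsimp only
  rw [gauge_smul_of_nonneg (by positivity), hy1, smul_eq_mul, mul_one, inv_inv, smul_smul,
    mul_inv_cancel₀ hy0, one_smul]

theorem Convex.lipschitzOnWith_inv_gauge_smul (hcv : Convex ℝ C) {r R : ℝ≥0} (hr : 0 < r)
    (hR : 0 < R) (hrC : ball 0 r ⊆ C) (hCR : C ⊆ closedBall 0 R) :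
    LipschitzOnWith (R + R ^ 2 / r) (fun u => (gauge C u)⁻¹ • u) (sphere 0 1) := by
  have hgauge := hcv.lipschitzWith_gauge hr hrC
  have habs : Absorbent ℝ C :=
    absorbent_nhds_zero (Filter.mem_of_superset (ball_mem_nhds 0 (by exact_mod_cast hr)) hrC)
  have hle : ∀ u ∈ sphere (0 : E) 1, (R : ℝ)⁻¹ ≤ gauge C u := fun u hu => by
    simpa [mem_sphere_zero_iff_norm.1 hu] using
      le_gauge_of_subset_closedBall (x := u) habs R.2 hCR
  rw [lipschitzOnWith_iff_dist_le_mul]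
  intro u hu v hv
  set a := gauge C u
  set b := gauge C v
  have ha : 0 < a := lt_of_lt_of_le (by positivity) (hle u hu)
  have hb : 0 < b := lt_of_lt_of_le (by positivity) (hle v hv)
  have ha' : a⁻¹ ≤ R := inv_le_of_inv_le₀ (by positivity) (hle u hu)
  have hb' : b⁻¹ ≤ R := inv_le_of_inv_le₀ (by positivity) (hle v hv)
  have hab : |b - a| ≤ (r : ℝ)⁻¹ * dist u v := by
    simpa [Real.dist_eq, abs_sub_comm] using hgauge.dist_le_mul u v
  have hinv : |a⁻¹ - b⁻¹| ≤ (R : ℝ) ^ 2 / r * dist u v := by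
    rw [inv_sub_inv ha.ne' hb.ne', abs_div, abs_mul, abs_of_pos ha, abs_of_pos hb, div_eq_mul_inv,
      mul_inv]
    calc |b - a| * (a⁻¹ * b⁻¹) ≤ (r : ℝ)⁻¹ * dist u v * (R * R) := by gcongr
      _ = (R : ℝ) ^ 2 / r * dist u v := by ring
  calc dist (a⁻¹ • u) (b⁻¹ • v) = ‖a⁻¹ • (u - v) + (a⁻¹ - b⁻¹) • v‖ := by
        rw [dist_eq_norm, smul_sub, sub_smul]; abel_nf
    _ ≤ a⁻¹ * dist u v + |a⁻¹ - b⁻¹| * 1 := by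
        grw [norm_add_le, norm_smul, norm_smul, Real.norm_of_nonneg (by positivity),
          Real.norm_eq_abs, ← dist_eq_norm, mem_sphere_zero_iff_norm.1 hv]
    _ ≤ (R + R ^ 2 / r : ℝ≥0) * dist u v := by
        push_cast
        nlinarith [dist_nonneg (x := u) (y := v)]

end RadialProjection

section ConvexFrontier

variable {E : Type*} [NormedAddCommGroup E] [NormedSpace ℝ E] [MeasurableSpace E] [BorelSpace E]
  {C : Set E} {d : ℝ}

theorem Convex.hausdorffMeasure_frontier_lt_top_of_mem_nhds_zero (hcv : Convex ℝ C)
    (hb : Bornology.IsBounded C) (h₀ : C ∈ 𝓝 0) (hd : 0 ≤ d)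
    (hS : μH[d] (sphere (0 : E) 1) < ∞) : μH[d] (frontier C) < ∞ := by
  obtain ⟨r, hr, hrC⟩ := Metric.mem_nhds_iff.1 h₀
  obtain ⟨R, hR, hCR⟩ := hb.subset_closedBall_lt 0 0
  lift r to ℝ≥0 using hr.le
  lift R to ℝ≥0 using hR.le
  calc μH[d] (frontier C) ≤ μH[d] ((fun u => (gauge C u)⁻¹ • u) '' sphere 0 1) :=
        measure_mono (hcv.frontier_subset_image_inv_gauge_smul_sphere h₀)
    _ ≤ ((R + R ^ 2 / r : ℝ≥0) : ℝ≥0∞) ^ d * μH[d] (sphere (0 : E) 1) :=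
        (hcv.lipschitzOnWith_inv_gauge_smul (by exact_mod_cast hr) (by exact_mod_cast hR) hrC
          hCR).hausdorffMeasure_image_le hd
    _ < ∞ := ENNReal.mul_lt_top (ENNReal.rpow_lt_top_of_nonneg hd ENNReal.coe_ne_top) hS

theorem Convex.hausdorffMeasure_frontier_lt_top (hcv : Convex ℝ C) (hC : IsCompact C)
    (hint : (interior C).Nonempty) (hd : 0 ≤ d) (hS : μH[d] (sphere (0 : E) 1) < ∞) :
    μH[d] (frontier C) < ∞ := by
  obtain ⟨a, ha⟩ := hint
  have hfr : frontier ((· + a) ⁻¹' C) = IsometryEquiv.addRight a ⁻¹' frontier C :=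
    ((Homeomorph.addRight a).preimage_frontier C).symm
  have h₀ : (· + a) ⁻¹' C ∈ 𝓝 0 :=
    (continuous_add_const a).continuousAt.preimage_mem_nhds
      (by simpa using mem_interior_iff_mem_nhds.1 ha)
  rw [← IsometryEquiv.hausdorffMeasure_preimage (IsometryEquiv.addRight a), ← hfr]
  exact (hcv.translate_preimage_left a).hausdorffMeasure_frontier_lt_top_of_mem_nhds_zero
    ((Homeomorph.addRight a).isCompact_preimage.2 hC).isBounded h₀ hd hS

end ConvexFrontier

theorem EuclideanSpace.hausdorffMeasure_sphere_lt_top :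
    μH[1] (sphere (0 : EuclideanSpace ℝ (Fin 2)) 1) < ∞ := by
  let e : ℂ ≃ᵢ EuclideanSpace ℝ (Fin 2) :=
    (Complex.isometryOfOrthonormal (EuclideanSpace.basisFun (Fin 2) ℝ)).toIsometryEquiv
  have hsphere :
      sphere (0 : EuclideanSpace ℝ (Fin 2)) 1 = e '' (circleMap 0 1 '' Ioc 0 (2 * π)) := by
    rw [image_circleMap_Ioc, e.image_sphere, abs_one]
    simp [e]
  rw [hsphere, e.hausdorffMeasure_image]
  calc μH[1] (circleMap 0 1 '' Ioc 0 (2 * π))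
      ≤ (Real.nnabs 1 : ℝ≥0∞) ^ (1 : ℝ) * μH[1] (Ioc (0 : ℝ) (2 * π)) :=
        (lipschitzWith_circleMap 0 1).hausdorffMeasure_image_le zero_le_one _
    _ < ∞ := by simp [hausdorffMeasure_real, ENNReal.mul_lt_top]

theorem ofReal_per_add_mul_vol_inter_image_add_right {K : Set (EuclideanSpace ℝ (Fin 2))}
    (hK : IsClosed K) (hper : μH[1] (frontier K) ≠ ∞) (hvol : volume K ≠ ∞) {α : ℝ} (hα : 0 ≤ α)
    {x : EuclideanSpace ℝ (Fin 2)} (hx : μH[1] (frontier K ∩ (· + x) '' frontier K) = 0) :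
    ENNReal.ofReal (per (K ∩ (· + x) '' K) + α * vol (K ∩ (· + x) '' K)) =
      μH[1].restrict (frontier K) ((· + x) '' K) + μH[1].restrict (frontier K) ((· + -x) '' K) +
        ENNReal.ofReal α * volume.restrict K ((· + x) '' K) := by
  have hsplit := hausdorffMeasure_frontier_inter_image_add_right hK x hx
  have hper' : μH[1] (frontier (K ∩ (· + x) '' K)) ≠ ∞ := by
    rw [hsplit]
    exact ENNReal.add_ne_top.2 ⟨measure_ne_top_of_subset inter_subset_right hper,
      measure_ne_top_of_subset inter_subset_right hper⟩
  have hvol' : volume (K ∩ (· + x) '' K) ≠ ∞ := measure_ne_top_of_subset inter_subset_left hvol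
  rw [per, vol, ENNReal.ofReal_add (by positivity) (by positivity), ENNReal.ofReal_mul hα,
    ENNReal.ofReal_toReal hper', ENNReal.ofReal_toReal hvol', hsplit,
    Measure.restrict_apply' isClosed_frontier.measurableSet,
    Measure.restrict_apply' isClosed_frontier.measurableSet,
    Measure.restrict_apply' hK.measurableSet, inter_comm K]

theorem lintegral_per_vol_covariogram_general
    (K : Set (EuclideanSpace ℝ (Fin 2))) (α : ℝ) (hα : 0 ≤ α)
    (hKcp : IsCompact K) (hKcv : Convex ℝ K)
    (hKint : (interior K).Nonempty) :
    ∫⁻ x : EuclideanSpace ℝ (Fin 2),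
        ENNReal.ofReal (per (K ∩ ((· + x) '' K)) + α * vol (K ∩ ((· + x) '' K)))
      = ENNReal.ofReal (vol K * (2 * per K + α * vol K)) := by
  have hKm : MeasurableSet K := hKcp.isClosed.measurableSet
  have hper : μH[1] (frontier K) ≠ ∞ := (hKcv.hausdorffMeasure_frontier_lt_top hKcp hKint
    zero_le_one EuclideanSpace.hausdorffMeasure_sphere_lt_top).ne
  have hvol : volume K ≠ ∞ := hKcp.measure_lt_top.ne
  set ν := μH[1].restrict (frontier K)
  have : IsFiniteMeasure ν := isFiniteMeasure_restrict.2 hper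
  have hmeas := measurable_measure_image_add_right ν hKm
  have hmeas_neg : Measurable fun x => ν ((· + -x) '' K) := hmeas.comp measurable_neg
  have hmeas_vol := measurable_measure_image_add_right (volume.restrict K) hKm
  have hae := ae_hausdorffMeasure_inter_image_add_right_eq_zero volume
    isClosed_frontier.measurableSet hper (hKcv.addHaar_frontier volume)
  calc _ = ∫⁻ x, ν ((· + x) '' K) + ν ((· + -x) '' K) +
          ENNReal.ofReal α * volume.restrict K ((· + x) '' K) :=
        lintegral_congr_ae (hae.mono fun x hx =>
          ofReal_per_add_mul_vol_inter_image_add_right hKcp.isClosed hper hvol hα hx)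
    _ = μH[1] (frontier K) * volume K + μH[1] (frontier K) * volume K +
          ENNReal.ofReal α * (volume K * volume K) := by
        rw [lintegral_add_right _ (hmeas_vol.const_mul _), lintegral_add_right _ hmeas_neg,
          lintegral_const_mul _ hmeas_vol, lintegral_neg_eq_self (fun x => ν ((· + x) '' K)),
          lintegral_measure_image_add_right _ _ hKm, lintegral_measure_image_add_right _ _ hKm,
          Measure.restrict_apply_univ, Measure.restrict_apply_univ]
    _ = ENNReal.ofReal (vol K * (2 * per K + α * vol K)) := by
        rw [per, vol, ENNReal.ofReal_mul ENNReal.toReal_nonneg,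
          ENNReal.ofReal_add (by positivity) (by positivity), ENNReal.ofReal_mul zero_le_two,
          ENNReal.ofReal_mul hα, ENNReal.ofReal_toReal hvol, ENNReal.ofReal_toReal hper,
          ENNReal.ofReal_ofNat]
        ring

/-- The integral over `ℝ²` of the `(per + α·vol)`-covariogram of a planar convex body `K`
equals `vol K · (2 · per K + α · vol K)`. -/
theorem lintegral_per_vol_covariogram
    (K : Set (EuclideanSpace ℝ (Fin 2))) (α : ℝ) (hα : 0 ≤ α)
    (hKne : K.Nonempty) (hKcp : IsCompact K) (hKcv : Convex ℝ K)
    (hKint : (interior K).Nonempty) :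
    ∫⁻ x : EuclideanSpace ℝ (Fin 2),
        ENNReal.ofReal (per (K ∩ ((· + x) '' K)) + α * vol (K ∩ ((· + x) '' K)))
      = ENNReal.ofReal (vol K * (2 * per K + α * vol K)) :=
  lintegral_per_vol_covariogram_general K α hα hKcp hKcv hKint
end

section
/- Let K be a convex body in ℝ² and let z ∈ ℝ² be a unit vector. Then the function ℝ² → ℝ given by x ↦ w(K ∩ (K + x), z) is concave on the difference body K − K = {a − b : a, b ∈ K}. (Instance of Theorem 3.1(IV): the per_B-covariogram is concave on DK; here B is the strip with normal z, so per_B is twice the width in direction z.) -/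
open MeasureTheory Set
open scoped Pointwise

/-! A convex combination of points of `K ∩ (K + x)` and `K ∩ (K + y)` lies in
`K ∩ (K + (a • x + b • y))`. The width of a compact set is realised by two of its points,
and the inner product with `z` is linear, so combining the extremal points of the two
smaller sets shows `a • w(K ∩ (K + x)) + b • w(K ∩ (K + y)) ≤ w(K ∩ (K + (a • x + b • y)))`. -/

section Translates

variable {V : Type*} [AddCommGroup V]

theorem inter_image_add_right_nonempty_of_mem_sub {K : Set V} {x : V} (hx : x ∈ K - K) :
    (K ∩ ((· + x) '' K)).Nonempty := by
  obtain ⟨p, hp, q, hq, rfl⟩ := hx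
  exact ⟨p, hp, q, hq, add_sub_cancel q p⟩

theorem Convex.smul_add_smul_mem_inter_image_add_right [Module ℝ V] {K : Set V}
    (hK : Convex ℝ K) {x y p q : V} (hp : p ∈ K ∩ ((· + x) '' K))
    (hq : q ∈ K ∩ ((· + y) '' K)) {a b : ℝ} (ha : 0 ≤ a) (hb : 0 ≤ b) (hab : a + b = 1) :
    a • p + b • q ∈ K ∩ ((· + (a • x + b • y)) '' K) := by
  obtain ⟨hpK, p', hp', rfl⟩ := hp
  obtain ⟨hqK, q', hq', rfl⟩ := hq
  refine ⟨hK hpK hqK ha hb hab, a • p' + b • q', hK hp' hq' ha hb hab, ?_⟩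
  simp only [smul_add]
  abel

end Translates

section Width

variable {E : Type*} [NormedAddCommGroup E] [InnerProductSpace ℝ E]

theorem IsCompact.exists_w_eq_inner_sub_inner {A : Set E} (hA : IsCompact A)
    (hne : A.Nonempty) (z : E) :
    ∃ p ∈ A, ∃ q ∈ A, w A z = inner ℝ p z - inner ℝ q z := by
  have hcont : ContinuousOn (fun a => (inner ℝ a z : ℝ)) A :=
    (continuous_id.inner continuous_const).continuousOn
  obtain ⟨p, hp, hsup⟩ := hA.exists_sSup_image_eq hne hcont
  obtain ⟨q, hq, hinf⟩ := hA.exists_sInf_image_eq hne hcont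
  exact ⟨p, hp, q, hq, by rw [w, hsup, hinf]⟩

theorem inner_sub_inner_le_w {C : Set E} (hC : Bornology.IsBounded C) {p q : E}
    (hp : p ∈ C) (hq : q ∈ C) (z : E) :
    inner ℝ p z - inner ℝ q z ≤ w C z := by
  have hbdd : Bornology.IsBounded ((fun a => (inner ℝ a z : ℝ)) '' C) := by
    convert (innerSL ℝ z).lipschitz.isBounded_image hC using 2 with a
    exact (real_inner_comm a z).symm
  exact sub_le_sub (le_csSup hbdd.bddAbove (mem_image_of_mem _ hp))
    (csInf_le hbdd.bddBelow (mem_image_of_mem _ hq))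

theorem smul_w_add_smul_w_le_w {A B C : Set E} (hA : IsCompact A) (hAne : A.Nonempty)
    (hB : IsCompact B) (hBne : B.Nonempty) (hC : Bornology.IsBounded C) (a b : ℝ)
    (hABC : ∀ p ∈ A, ∀ q ∈ B, a • p + b • q ∈ C) (z : E) :
    a * w A z + b * w B z ≤ w C z := by
  obtain ⟨p, hp, q, hq, hwA⟩ := hA.exists_w_eq_inner_sub_inner hAne z
  obtain ⟨p', hp', q', hq', hwB⟩ := hB.exists_w_eq_inner_sub_inner hBne z
  calc a * w A z + b * w B z
      = inner ℝ (a • p + b • p') z - inner ℝ (a • q + b • q') z := by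
        simp only [hwA, hwB, inner_add_left, real_inner_smul_left]
        ring
    _ ≤ w C z := inner_sub_inner_le_w hC (hABC p hp p' hp') (hABC q hq q' hq') z

end Width

theorem width_covariogram_concaveOn_difference_body_general
    (K : Set (EuclideanSpace ℝ (Fin 2)))
    (z : EuclideanSpace ℝ (Fin 2))
    (hKcp : IsCompact K) (hKcv : Convex ℝ K) :
    ConcaveOn ℝ (K - K) (fun x => w (K ∩ ((· + x) '' K)) z) := by
  have hcompact : ∀ x, IsCompact (K ∩ ((· + x) '' K)) := fun x =>
    hKcp.inter_right (hKcp.image (continuous_add_const x)).isClosed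
  refine ⟨hKcv.sub hKcv, fun x hx y hy a b ha hb hab => ?_⟩
  simp only [smul_eq_mul]
  exact smul_w_add_smul_w_le_w (hcompact x) (inter_image_add_right_nonempty_of_mem_sub hx)
    (hcompact y) (inter_image_add_right_nonempty_of_mem_sub hy) (hcompact _).isBounded a b
    (fun p hp q hq => hKcv.smul_add_smul_mem_inter_image_add_right hp hq ha hb hab) z

/-- The width-covariogram of a planar convex body `K` is concave on the
difference body `K − K`. -/
theorem width_covariogram_concaveOn_difference_body
    (K : Set (EuclideanSpace ℝ (Fin 2)))
    (z : EuclideanSpace ℝ (Fin 2)) (hz : ‖z‖ = 1)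
    (hKne : K.Nonempty) (hKcp : IsCompact K) (hKcv : Convex ℝ K)
    (hKint : (interior K).Nonempty) :
    ConcaveOn ℝ (K - K) (fun x => w (K ∩ ((· + x) '' K)) z) :=
  width_covariogram_concaveOn_difference_body_general K z hKcp hKcv
end

section
/- Let F and G be nonempty compact convex subsets of ℝⁿ with F − F = G − G, and let K = conv(F ∪ G). Then K − K = conv((F − G) ∪ (G − F) ∪ (F − F)), where for sets A, B we write A − B = {a − b : a ∈ A, b ∈ B}. (Decomposition of the difference body of a prismatoid with translation-congruent difference sets of its bases, equation (6.2).) -/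
open Set
open scoped Pointwise

theorem Set.union_sub_union_self {α : Type*} [Sub α] (F G : Set α) :
    (F ∪ G) - (F ∪ G) = (F - G) ∪ (G - F) ∪ (F - F) ∪ (G - G) := by
  rw [union_sub, sub_union, sub_union]
  ac_rfl

theorem convexHull_union_sub_convexHull_union {𝕜 E : Type*} [Field 𝕜] [LinearOrder 𝕜]
    [IsStrictOrderedRing 𝕜] [AddCommGroup E] [Module 𝕜 E] {F G : Set E} (hFG : F - F = G - G) :
    convexHull 𝕜 (F ∪ G) - convexHull 𝕜 (F ∪ G)
      = convexHull 𝕜 ((F - G) ∪ (G - F) ∪ (F - F)) := by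
  rw [← convexHull_sub, union_sub_union_self, ← hFG, union_assoc _ (F - F), union_self]

theorem difference_body_convexHull_union_general
    (n : ℕ) (F G : Set (EuclideanSpace ℝ (Fin n)))
    (hFG : F - F = G - G) :
    convexHull ℝ (F ∪ G) - convexHull ℝ (F ∪ G)
      = convexHull ℝ ((F - G) ∪ (G - F) ∪ (F - F)) :=
  convexHull_union_sub_convexHull_union hFG

/-- Decomposition of the difference body of `K = conv(F ∪ G)` when `F − F = G − G`:
`K − K = conv((F − G) ∪ (G − F) ∪ (F − F))`. -/
theorem difference_body_convexHull_union
    (n : ℕ) (F G : Set (EuclideanSpace ℝ (Fin n)))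
    (hFne : F.Nonempty) (hFcp : IsCompact F) (hFcv : Convex ℝ F)
    (hGne : G.Nonempty) (hGcp : IsCompact G) (hGcv : Convex ℝ G)
    (hFG : F - F = G - G) :
    convexHull ℝ (F ∪ G) - convexHull ℝ (F ∪ G)
      = convexHull ℝ ((F - G) ∪ (G - F) ∪ (F - F)) :=
  difference_body_convexHull_union_general n F G hFG
end

section
/- Let z ∈ ℝⁿ be a unit vector, let a > b be real numbers, and let F, G be nonempty compact convex subsets of ℝⁿ with F ⊆ {x : ⟪x,z⟫ = a}, G ⊆ {x : ⟪x,z⟫ = b}, and F − F = G − G. Let K = conv(F ∪ G). Then for every x ∈ K − K one has w(K ∩ (K + x), z) = (a − b) − |⟪x, z⟫|. (Theorem 6.3(I): the width-covariogram of such a z-prismatoid is completely determined by its width and the inner product with z.) -/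
/-!
Every point of `K = conv(F ∪ G)` is `l • f + (1 - l) • g` with `f ∈ F`, `g ∈ G`, `l ∈ [0, 1]`,
at height `⟪·, z⟫ = l a + (1 - l) b`; in particular `K` lies between heights `b` and `a`, so
every point of `K ∩ (K + x)` has height at most `min a (a + ⟪x, z⟫)` and at least
`max b (b + ⟪x, z⟫)`. These bounds are attained: if `x = k₁ - k₂` with `⟪x, z⟫ ≥ 0`, the
hypothesis `G - G ⊆ F - F` rewrites the `G`-part of `k₁ - k₂` as a difference of points of `F`,
which yields `f ∈ F` with `f - x ∈ K`, i.e. a point of height `a` in `K ∩ (K + x)`. The other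
sign is handled with `-x`, and the lower bound by swapping `F, G` and negating `z`.
-/

open MeasureTheory Set
open scoped Pointwise

theorem Convex.smul_add_smul_add_smul_mem {𝕜 E : Type*} [Field 𝕜] [LinearOrder 𝕜]
    [IsStrictOrderedRing 𝕜] [AddCommGroup E] [Module 𝕜 E] {C : Set E} (hC : Convex 𝕜 C)
    {p q r : E} (hp : p ∈ C) (hq : q ∈ C) (hr : r ∈ C) {α β γ : 𝕜}
    (hα : 0 ≤ α) (hβ : 0 ≤ β) (hγ : 0 ≤ γ) (h : α + β + γ = 1) :
    α • p + β • q + γ • r ∈ C := by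
  have := hC.sum_mem (t := Finset.univ) (w := ![α, β, γ]) (z := ![p, q, r])
    (by simp [Fin.forall_fin_succ, hα, hβ, hγ]) (by simp [Fin.sum_univ_three, h])
    (by simp [Fin.forall_fin_succ, hp, hq, hr])
  simpa [Fin.sum_univ_three] using this

theorem Convex.exists_eq_smul_add_one_sub_smul_of_mem_convexHull_union {E : Type*}
    [AddCommGroup E] [Module ℝ E] {F G : Set E} (hFcv : Convex ℝ F) (hGcv : Convex ℝ G)
    (hFne : F.Nonempty) (hGne : G.Nonempty) {k : E} (hk : k ∈ convexHull ℝ (F ∪ G)) :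
    ∃ l ∈ Icc (0 : ℝ) 1, ∃ f ∈ F, ∃ g ∈ G, l • f + (1 - l) • g = k := by
  rw [hFcv.convexHull_union hGcv hFne hGne, mem_convexJoin] at hk
  obtain ⟨f, hf, g, hg, l, m, hl, hm, hlm, rfl⟩ := hk
  obtain rfl : m = 1 - l := by linarith
  exact ⟨l, ⟨hl, by linarith⟩, f, hf, g, hg, rfl⟩

section Prismatoid

variable {E : Type*} [NormedAddCommGroup E] [InnerProductSpace ℝ E] {z : E} {a b : ℝ}
  {F G : Set E}

theorem convexHull_union_subset_inner_le (hba : b ≤ a)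
    (hFz : F ⊆ {x | (inner ℝ x z : ℝ) = a}) (hGz : G ⊆ {x | (inner ℝ x z : ℝ) = b}) :
    convexHull ℝ (F ∪ G) ⊆ {x | (inner ℝ x z : ℝ) ≤ a} := by
  refine convexHull_min (union_subset ?_ ?_) (convex_halfSpace_le ?_ a)
  · exact fun x hx => (hFz hx).le
  · exact fun x hx => (hGz hx).trans_le hba
  · exact ⟨fun x y => inner_add_left x y z, fun c x => real_inner_smul_left x z c⟩

theorem exists_sub_mem_convexHull_union_of_inner_nonneg (hab : b < a)
    (hFcv : Convex ℝ F) (hGcv : Convex ℝ G) (hFne : F.Nonempty) (hGne : G.Nonempty)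
    (hFz : F ⊆ {x | (inner ℝ x z : ℝ) = a}) (hGz : G ⊆ {x | (inner ℝ x z : ℝ) = b})
    (hGF : G - G ⊆ F - F) {x : E}
    (hx : x ∈ convexHull ℝ (F ∪ G) - convexHull ℝ (F ∪ G)) (hxz : 0 ≤ (inner ℝ x z : ℝ)) :
    ∃ f ∈ F, f - x ∈ convexHull ℝ (F ∪ G) := by
  have hrep := fun {k} (hk : k ∈ convexHull ℝ (F ∪ G)) =>
    hFcv.exists_eq_smul_add_one_sub_smul_of_mem_convexHull_union hGcv hFne hGne hk
  obtain ⟨k₁, hk₁, k₂, hk₂, rfl⟩ := hx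
  obtain ⟨l₁, ⟨hl₁0, hl₁1⟩, f₁, hf₁, g₁, hg₁, rfl⟩ := hrep hk₁
  obtain ⟨l₂, ⟨hl₂0, hl₂1⟩, f₂, hf₂, g₂, hg₂, rfl⟩ := hrep hk₂
  have hheight : (inner ℝ (l₁ • f₁ + (1 - l₁) • g₁ - (l₂ • f₂ + (1 - l₂) • g₂)) z : ℝ)
      = (l₁ - l₂) * (a - b) := by
    rw [inner_sub_left, inner_add_left, inner_add_left, real_inner_smul_left,
      real_inner_smul_left, real_inner_smul_left, real_inner_smul_left, hFz hf₁, hFz hf₂,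
      hGz hg₁, hGz hg₂]
    ring
  have hl : l₂ ≤ l₁ := by
    rw [hheight] at hxz
    nlinarith
  obtain ⟨f₃, hf₃, f₄, hf₄, hf₃₄ : f₃ - f₄ = g₁ - g₂⟩ := hGF (sub_mem_sub hg₁ hg₂)
  have hFK : F ⊆ convexHull ℝ (F ∪ G) := subset_union_left.trans (subset_convexHull ℝ _)
  refine ⟨l₁ • f₁ + (1 - l₁) • f₃, hFcv hf₁ hf₃ hl₁0 (by linarith) (by ring), ?_⟩
  have hdiff : l₁ • f₁ + (1 - l₁) • f₃ - (l₁ • f₁ + (1 - l₁) • g₁ - (l₂ • f₂ + (1 - l₂) • g₂))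
      = l₂ • f₂ + (1 - l₁) • f₄ + (l₁ - l₂) • g₂ := by
    rw [sub_eq_iff_eq_add.mp hf₃₄]
    module
  rw [hdiff]
  exact (convex_convexHull ℝ _).smul_add_smul_add_smul_mem (hFK hf₂) (hFK hf₄)
    (subset_union_right.trans (subset_convexHull ℝ _) hg₂) hl₂0 (by linarith) (by linarith)
    (by ring)

theorem isGreatest_inner_inter_translate_convexHull_union (hab : b < a)
    (hFcv : Convex ℝ F) (hGcv : Convex ℝ G) (hFne : F.Nonempty) (hGne : G.Nonempty)
    (hFz : F ⊆ {x | (inner ℝ x z : ℝ) = a}) (hGz : G ⊆ {x | (inner ℝ x z : ℝ) = b})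
    (hGF : G - G ⊆ F - F) {x : E}
    (hx : x ∈ convexHull ℝ (F ∪ G) - convexHull ℝ (F ∪ G)) :
    IsGreatest ((fun p => (inner ℝ p z : ℝ)) ''
        (convexHull ℝ (F ∪ G) ∩ ((· + x) '' convexHull ℝ (F ∪ G))))
      (min a (a + inner ℝ x z)) := by
  have hFK : F ⊆ convexHull ℝ (F ∪ G) := subset_union_left.trans (subset_convexHull ℝ _)
  have hKa := convexHull_union_subset_inner_le hab.le hFz hGz
  refine ⟨?_, ?_⟩
  · rcases le_total 0 (inner ℝ x z : ℝ) with hxz | hxz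
    · obtain ⟨f, hf, hfx⟩ :=
        exists_sub_mem_convexHull_union_of_inner_nonneg hab hFcv hGcv hFne hGne hFz hGz hGF hx hxz
      refine ⟨f, ⟨hFK hf, f - x, hfx, sub_add_cancel f x⟩, ?_⟩
      dsimp only
      rw [hFz hf, min_eq_left (by linarith)]
    · have hnx : -x ∈ convexHull ℝ (F ∪ G) - convexHull ℝ (F ∪ G) := by
        obtain ⟨k₁, hk₁, k₂, hk₂, rfl⟩ := hx
        exact ⟨k₂, hk₂, k₁, hk₁, (neg_sub k₁ k₂).symm⟩
      obtain ⟨f, hf, hfx⟩ := exists_sub_mem_convexHull_union_of_inner_nonneg hab hFcv hGcv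
        hFne hGne hFz hGz hGF hnx (by rw [inner_neg_left]; linarith)
      rw [sub_neg_eq_add] at hfx
      refine ⟨f + x, ⟨hfx, f, hFK hf, rfl⟩, ?_⟩
      dsimp only
      rw [inner_add_left, hFz hf, min_eq_right (by linarith)]
  · rintro _ ⟨_, ⟨hpK, q, hqK, rfl⟩, rfl⟩
    refine le_min (hKa hpK) ?_
    dsimp only
    rw [inner_add_left]
    linarith [show (inner ℝ q z : ℝ) ≤ a from hKa hqK]

theorem isLeast_inner_inter_translate_convexHull_union (hab : b < a)
    (hFcv : Convex ℝ F) (hGcv : Convex ℝ G) (hFne : F.Nonempty) (hGne : G.Nonempty)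
    (hFz : F ⊆ {x | (inner ℝ x z : ℝ) = a}) (hGz : G ⊆ {x | (inner ℝ x z : ℝ) = b})
    (hFG : F - F ⊆ G - G) {x : E}
    (hx : x ∈ convexHull ℝ (F ∪ G) - convexHull ℝ (F ∪ G)) :
    IsLeast ((fun p => (inner ℝ p z : ℝ)) ''
        (convexHull ℝ (F ∪ G) ∩ ((· + x) '' convexHull ℝ (F ∪ G))))
      (max b (b + inner ℝ x z)) := by
  have h := isGreatest_inner_inter_translate_convexHull_union (z := -z) (a := -b) (b := -a)
    (neg_lt_neg hab) hGcv hFcv hGne hFne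
    (fun g hg => by simp [hGz hg]) (fun f hf => by simp [hFz hf]) hFG (by rwa [union_comm])
  simp only [union_comm G F, inner_neg_right, ← neg_add, min_neg_neg] at h
  obtain ⟨⟨p, hp, hpz⟩, hle⟩ := h
  exact ⟨⟨p, hp, neg_inj.mp hpz⟩,
    forall_mem_image.2 fun q hq => neg_le_neg_iff.mp (hle (mem_image_of_mem _ hq))⟩

end Prismatoid

theorem width_covariogram_of_prismatoid_general
    (n : ℕ) (z : EuclideanSpace ℝ (Fin n))
    (a b : ℝ) (hab : b < a)
    (F G : Set (EuclideanSpace ℝ (Fin n)))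
    (hFne : F.Nonempty) (hFcv : Convex ℝ F)
    (hGne : G.Nonempty) (hGcv : Convex ℝ G)
    (hFz : F ⊆ {x | (inner ℝ x z : ℝ) = a})
    (hGz : G ⊆ {x | (inner ℝ x z : ℝ) = b})
    (hFG : F - F = G - G) :
    ∀ x ∈ convexHull ℝ (F ∪ G) - convexHull ℝ (F ∪ G),
      w (convexHull ℝ (F ∪ G) ∩ ((· + x) '' convexHull ℝ (F ∪ G))) z
        = (a - b) - |(inner ℝ x z : ℝ)| := by
  intro x hx
  rw [w, (isGreatest_inner_inter_translate_convexHull_union hab hFcv hGcv hFne hGne hFz hGz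
      hFG.ge hx).csSup_eq, (isLeast_inner_inter_translate_convexHull_union hab hFcv hGcv hFne
      hGne hFz hGz hFG.le hx).csInf_eq]
  rcases le_total 0 (inner ℝ x z : ℝ) with hxz | hxz
  · rw [min_eq_left (by linarith), max_eq_right (by linarith), abs_of_nonneg hxz]
    ring
  · rw [min_eq_right (by linarith), max_eq_left (by linarith), abs_of_nonpos hxz]
    ring

/-- The width-covariogram of a `z`-prismatoid `K = conv(F ∪ G)` whose bases have equal
difference sets: for every `x ∈ K − K`, `w(K ∩ (K + x), z) = (a − b) − |⟪x, z⟫|`. -/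
theorem width_covariogram_of_prismatoid
    (n : ℕ) (z : EuclideanSpace ℝ (Fin n)) (hz : ‖z‖ = 1)
    (a b : ℝ) (hab : b < a)
    (F G : Set (EuclideanSpace ℝ (Fin n)))
    (hFne : F.Nonempty) (hFcp : IsCompact F) (hFcv : Convex ℝ F)
    (hGne : G.Nonempty) (hGcp : IsCompact G) (hGcv : Convex ℝ G)
    (hFz : F ⊆ {x | (inner ℝ x z : ℝ) = a})
    (hGz : G ⊆ {x | (inner ℝ x z : ℝ) = b})
    (hFG : F - F = G - G) :
    ∀ x ∈ convexHull ℝ (F ∪ G) - convexHull ℝ (F ∪ G),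
      w (convexHull ℝ (F ∪ G) ∩ ((· + x) '' convexHull ℝ (F ∪ G))) z
        = (a - b) - |(inner ℝ x z : ℝ)| :=
  width_covariogram_of_prismatoid_general n z a b hab F G hFne hFcv hGne hGcv hFz hGz hFG
end

section
/- Let E = ℝ^ℓ × ℝ^m be the product of Euclidean spaces (with the product inner-product structure), and let φ : Set E → ℝ be invariant under every surjective isometry of E, i.e. φ(T '' A) = φ(A) for every isometric bijection T : E → E and every A ⊆ E. Let K be a convex body in ℝ^ℓ and H a convex body in ℝ^m. Then for every x ∈ ℝ^ℓ and y ∈ ℝ^m: φ((K ×ˢ H) ∩ ((K ×ˢ H) + (x,y))) = φ((K ×ˢ (−H)) ∩ ((K ×ˢ (−H)) + (x,y))). (Theorem 6.1(I): the only property of the valuation φ used is its invariance under isometries of E.) -/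
/-!
The isometry `(u, v) ↦ (u, y - v)` of `ℝ^ℓ × ℝ^m` maps
`(K × H) ∩ ((K × H) + (x, y)) = (K ∩ (K + x)) × (H ∩ (H + y))` onto
`(K ∩ (K + x)) × ((-H) ∩ ((-H) + y))`, the corresponding set for `K × (-H)`.
-/

open Set
open scoped Pointwise

/-- The Cartesian product of a set `K ⊆ ℝ^ℓ` and `H ⊆ ℝ^m`, viewed as a subset of the
product Euclidean space `WithLp 2 (ℝ^ℓ × ℝ^m)` (the product inner-product structure). -/
noncomputable def prodW {l m : ℕ} (K : Set (EuclideanSpace ℝ (Fin l)))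
    (H : Set (EuclideanSpace ℝ (Fin m))) :
    Set (WithLp 2 (EuclideanSpace ℝ (Fin l) × EuclideanSpace ℝ (Fin m))) :=
  (WithLp.equiv 2 (EuclideanSpace ℝ (Fin l) × EuclideanSpace ℝ (Fin m))).symm '' (K ×ˢ H)

theorem Set.image_sub_left_inter_image_add_right {G : Type*} [AddCommGroup G] (B : Set G) (y : G) :
    (fun v => y - v) '' (B ∩ ((· + y) '' B)) = -B ∩ ((· + y) '' (-B)) := by
  rw [(sub_right_injective (b := y)).injOn.image_inter (subset_univ _) (subset_univ _), inter_comm,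
    image_image]
  congr 1
  · simp
  · simp only [sub_eq_neg_add, ← image_neg_eq_neg, image_image]

variable {l m : ℕ}

theorem mem_prodW {K : Set (EuclideanSpace ℝ (Fin l))} {H : Set (EuclideanSpace ℝ (Fin m))}
    {z : WithLp 2 (EuclideanSpace ℝ (Fin l) × EuclideanSpace ℝ (Fin m))} :
    z ∈ prodW K H ↔ z.fst ∈ K ∧ z.snd ∈ H := by
  constructor
  · rintro ⟨⟨a, b⟩, ⟨ha, hb⟩, rfl⟩
    exact ⟨ha, hb⟩
  · rintro ⟨hK, hH⟩
    exact ⟨(z.fst, z.snd), ⟨hK, hH⟩, rfl⟩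

theorem prodW_inter_image_add_right (K : Set (EuclideanSpace ℝ (Fin l)))
    (H : Set (EuclideanSpace ℝ (Fin m))) (x : EuclideanSpace ℝ (Fin l))
    (y : EuclideanSpace ℝ (Fin m)) :
    prodW K H ∩ ((· + (WithLp.equiv 2 _).symm (x, y)) '' prodW K H) =
      prodW (K ∩ ((· + x) '' K)) (H ∩ ((· + y) '' H)) := by
  ext z
  simp only [mem_inter_iff, image_add_right, mem_preimage, mem_prodW, WithLp.add_fst,
    WithLp.add_snd, WithLp.neg_fst, WithLp.neg_snd, WithLp.equiv_symm_apply, WithLp.toLp_fst,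
    WithLp.toLp_snd]
  tauto

theorem image_withLpProdCongr_prodW
    (f : EuclideanSpace ℝ (Fin l) ≃ᵢ EuclideanSpace ℝ (Fin l))
    (g : EuclideanSpace ℝ (Fin m) ≃ᵢ EuclideanSpace ℝ (Fin m))
    (K : Set (EuclideanSpace ℝ (Fin l))) (H : Set (EuclideanSpace ℝ (Fin m))) :
    IsometryEquiv.withLpProdCongr 2 f g '' prodW K H = prodW (f '' K) (g '' H) := by
  simp only [prodW, ← prodMap_image_prod, image_image]
  rfl

theorem covariogram_prod_neg_of_isometry_invariant_general
    (l m : ℕ)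
    (φ : Set (WithLp 2 (EuclideanSpace ℝ (Fin l) × EuclideanSpace ℝ (Fin m))) → ℝ)
    (hφ : ∀ (T : WithLp 2 (EuclideanSpace ℝ (Fin l) × EuclideanSpace ℝ (Fin m)) ≃ᵢ
              WithLp 2 (EuclideanSpace ℝ (Fin l) × EuclideanSpace ℝ (Fin m)))
          (A : Set (WithLp 2 (EuclideanSpace ℝ (Fin l) × EuclideanSpace ℝ (Fin m)))),
          φ (T '' A) = φ A)
    (K : Set (EuclideanSpace ℝ (Fin l)))
    (H : Set (EuclideanSpace ℝ (Fin m)))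
    (x : EuclideanSpace ℝ (Fin l)) (y : EuclideanSpace ℝ (Fin m)) :
    φ (prodW K H ∩
        ((· + (WithLp.equiv 2 (EuclideanSpace ℝ (Fin l) × EuclideanSpace ℝ (Fin m))).symm (x, y))
          '' prodW K H))
      = φ (prodW K (-H) ∩
        ((· + (WithLp.equiv 2 (EuclideanSpace ℝ (Fin l) × EuclideanSpace ℝ (Fin m))).symm (x, y))
          '' prodW K (-H))) := by
  rw [prodW_inter_image_add_right, prodW_inter_image_add_right,
    ← image_sub_left_inter_image_add_right H y,
    ← hφ (.withLpProdCongr 2 (.refl _) (.subLeft y)), image_withLpProdCongr_prodW]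
  exact congrArg (φ <| prodW · _) (image_id _)

/-- Theorem 6.1(I): if `φ` is invariant under all isometric bijections of the product
Euclidean space `E = ℝ^ℓ × ℝ^m`, then the `φ`-covariograms of `K × H` and `K × (−H)`
coincide. -/
theorem covariogram_prod_neg_of_isometry_invariant
    (l m : ℕ)
    (φ : Set (WithLp 2 (EuclideanSpace ℝ (Fin l) × EuclideanSpace ℝ (Fin m))) → ℝ)
    (hφ : ∀ (T : WithLp 2 (EuclideanSpace ℝ (Fin l) × EuclideanSpace ℝ (Fin m)) ≃ᵢ
              WithLp 2 (EuclideanSpace ℝ (Fin l) × EuclideanSpace ℝ (Fin m)))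
          (A : Set (WithLp 2 (EuclideanSpace ℝ (Fin l) × EuclideanSpace ℝ (Fin m)))),
          φ (T '' A) = φ A)
    (K : Set (EuclideanSpace ℝ (Fin l)))
    (hKne : K.Nonempty) (hKcp : IsCompact K) (hKcv : Convex ℝ K)
    (hKint : (interior K).Nonempty)
    (H : Set (EuclideanSpace ℝ (Fin m)))
    (hHne : H.Nonempty) (hHcp : IsCompact H) (hHcv : Convex ℝ H)
    (hHint : (interior H).Nonempty)
    (x : EuclideanSpace ℝ (Fin l)) (y : EuclideanSpace ℝ (Fin m)) :
    φ (prodW K H ∩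
        ((· + (WithLp.equiv 2 (EuclideanSpace ℝ (Fin l) × EuclideanSpace ℝ (Fin m))).symm (x, y))
          '' prodW K H))
      = φ (prodW K (-H) ∩
        ((· + (WithLp.equiv 2 (EuclideanSpace ℝ (Fin l) × EuclideanSpace ℝ (Fin m))).symm (x, y))
          '' prodW K (-H))) :=
  covariogram_prod_neg_of_isometry_invariant_general l m φ hφ K H x y
end

section
/- Let n ≥ 4 and let φ : Set ℝⁿ → ℝ be invariant under every surjective isometry of ℝⁿ, i.e. φ(T '' A) = φ(A) for every isometric bijection T : ℝⁿ → ℝⁿ and every A ⊆ ℝⁿ. Then there exist convex bodies A, A' ⊆ ℝⁿ such that φ(A ∩ (A + x)) = φ(A' ∩ (A' + x)) for every x ∈ ℝⁿ, while A' is neither a translate nor a reflected translate of A: for every t ∈ ℝⁿ, A' ≠ A + t and A' ≠ (−A) + t. (Theorem 6.1(II): nondetermination by the φ-covariogram in every dimension n ≥ 4.) -/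
/-!
Take `A = K × L × C` with `K`, `L` triangles in two coordinate planes and `C` a cube, and let
`A' = K × (-L) × C` be its image under the isometry negating the coordinates of `L`. Since
`x - (L ∩ (L + x)) = (-L) ∩ (-L + x)` and `A` is a product, the reflection `p ↦ x - p` in the
coordinates of `L` is an isometry mapping `A ∩ (A + x)` onto `A' ∩ (A' + x)`, so an
isometry-invariant `φ` cannot tell the two covariograms apart. But `A'` is not a translate of `A`
because `L` is not centrally symmetric, nor a translate of `-A` because `K` is not.
-/

open Set

def IsConvexBody {E : Type*} [AddCommGroup E] [Module ℝ E] [TopologicalSpace E] (A : Set E) :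
    Prop :=
  A.Nonempty ∧ IsCompact A ∧ Convex ℝ A ∧ (interior A).Nonempty

theorem IsConvexBody.image {E F : Type*} [AddCommGroup E] [Module ℝ E] [TopologicalSpace E]
    [AddCommGroup F] [Module ℝ F] [TopologicalSpace F] {A : Set E} (hA : IsConvexBody A)
    (f : E ≃L[ℝ] F) : IsConvexBody (f '' A) :=
  ⟨hA.1.image f, hA.2.1.image f.continuous, hA.2.2.1.linear_image (f : E →ₗ[ℝ] F),
    f.toHomeomorph.image_interior A ▸ hA.2.2.2.image f⟩

theorem mem_image_add_right_iff_sub_mem {G : Type*} [AddGroup G] {A : Set G} {q x : G} :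
    q ∈ (· + x) '' A ↔ q - x ∈ A := by
  simp [sub_eq_add_neg]

theorem mem_image_neg_add_iff_sub_mem {G : Type*} [AddCommGroup G] {A : Set G} {q t : G} :
    q ∈ (fun p => -p + t) '' A ↔ t - q ∈ A := by
  constructor
  · rintro ⟨a, ha, rfl⟩
    simpa using ha
  · exact fun h => ⟨t - q, h, by simp⟩

namespace EuclideanSpace

/-- `A` is the product of a set in the `S`-coordinates and a set in the remaining ones. -/
def IsProductAlong {ι : Type*} [DecidableEq ι] (S : Finset ι) (A : Set (EuclideanSpace ℝ ι)) :
    Prop :=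
  ∀ a ∈ A, ∀ b ∈ A, WithLp.toLp 2 (S.piecewise b.ofLp a.ofLp) ∈ A

section

variable {ι : Type*} [Fintype ι] [DecidableEq ι]

noncomputable def negOn (S : Finset ι) :
    EuclideanSpace ℝ ι ≃ₗᵢ[ℝ] EuclideanSpace ℝ ι :=
  .piLpCongrRight 2 fun i => if i ∈ S then .neg ℝ else .refl ℝ ℝ

@[simp]
theorem negOn_apply (S : Finset ι) (p : EuclideanSpace ℝ ι) (i : ι) :
    negOn S p i = if i ∈ S then -p i else p i := by
  by_cases hi : i ∈ S <;> simp [negOn, hi]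

theorem negOn_negOn (S : Finset ι) (p : EuclideanSpace ℝ ι) : negOn S (negOn S p) = p := by
  ext i; by_cases hi : i ∈ S <;> simp [hi]

theorem negOn_single_of_notMem {S : Finset ι} {i : ι} (hi : i ∉ S) (a : ℝ) :
    negOn S (single i a) = single i a := by
  ext j
  by_cases hj : j = i
  · subst hj; simp [hi]
  · simp [hj]

theorem negOn_symm (S : Finset ι) : (negOn S).symm = negOn S :=
  LinearIsometryEquiv.ext fun p => (negOn S).symm_apply_eq.mpr (negOn_negOn S p).symm

theorem mem_image_negOn {S : Finset ι} {A : Set (EuclideanSpace ℝ ι)}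
    {q : EuclideanSpace ℝ ι} :
    q ∈ negOn S '' A ↔ negOn S q ∈ A := by
  rw [LinearIsometryEquiv.image_eq_preimage_symm, negOn_symm, mem_preimage]

noncomputable def reflectOn (S : Finset ι) (x : EuclideanSpace ℝ ι) :
    EuclideanSpace ℝ ι ≃ᵢ EuclideanSpace ℝ ι :=
  (negOn S).toIsometryEquiv.trans (IsometryEquiv.addRight (WithLp.toLp 2 (S.piecewise x.ofLp 0)))

theorem reflectOn_apply (S : Finset ι) (x p : EuclideanSpace ℝ ι) (i : ι) :
    reflectOn S x p i = if i ∈ S then x i - p i else p i := by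
  by_cases hi : i ∈ S <;> simp [reflectOn, hi, neg_add_eq_sub]

theorem reflectOn_involutive (S : Finset ι) (x : EuclideanSpace ℝ ι) :
    Function.Involutive (reflectOn S x) := by
  intro p
  ext i
  by_cases hi : i ∈ S <;> simp [reflectOn_apply, hi]

theorem image_reflectOn_inter_add {S : Finset ι} {A : Set (EuclideanSpace ℝ ι)}
    (hA : IsProductAlong S A) (x : EuclideanSpace ℝ ι) :
    reflectOn S x '' (A ∩ (· + x) '' A) =
      negOn S '' A ∩ (· + x) '' (negOn S '' A) := by
  ext q
  simp only [mem_inter_iff, mem_image_add_right_iff_sub_mem, mem_image_negOn]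
  constructor
  · rintro ⟨p, ⟨hp, hpx⟩, rfl⟩
    rw [mem_image_add_right_iff_sub_mem] at hpx
    constructor
    · convert hA p hp (p - x) hpx using 1
      ext i; by_cases hi : i ∈ S <;> simp [hi, reflectOn_apply]
    · convert hA (p - x) hpx p hp using 1
      ext i; by_cases hi : i ∈ S <;> simp [hi, reflectOn_apply]
  · rintro ⟨hq, hqx⟩
    refine ⟨reflectOn S x q, ⟨?_, ?_⟩, reflectOn_involutive S x q⟩
    · convert hA _ hq _ hqx using 1
      ext i; by_cases hi : i ∈ S <;> simp [hi, reflectOn_apply, neg_add_eq_sub]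
    · rw [mem_image_add_right_iff_sub_mem]
      convert hA _ hqx _ hq using 1
      ext i; by_cases hi : i ∈ S <;> simp [hi, reflectOn_apply]

end

section TriangleBody

variable {ι : Type*}

def triangleBody (e : Fin 4 ↪ ι) : Set (EuclideanSpace ℝ ι) :=
  {p | (0 ≤ p (e 0) ∧ 0 ≤ p (e 1) ∧ p (e 0) + p (e 1) ≤ 1) ∧
    (0 ≤ p (e 2) ∧ 0 ≤ p (e 3) ∧ p (e 2) + p (e 3) ≤ 1) ∧
    ∀ i ∉ range e, p i ∈ Icc 0 1}

variable (e : Fin 4 ↪ ι)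

theorem zero_mem_triangleBody : 0 ∈ triangleBody e := by
  simp [triangleBody]

theorem single_mem_triangleBody [DecidableEq ι] (k : Fin 4) :
    single (e k) 1 ∈ triangleBody e := by
  refine ⟨?_, ?_, fun i hi => ?_⟩
  · fin_cases k <;> simp
  · fin_cases k <;> simp
  · rw [PiLp.single_apply, if_neg fun h => hi ⟨k, h.symm⟩]
    simp

theorem coord_mem_Icc_of_mem_triangleBody {p : EuclideanSpace ℝ ι} (hp : p ∈ triangleBody e)
    (i : ι) : p i ∈ Icc 0 1 := by
  obtain ⟨⟨h0, h1, h01⟩, ⟨h2, h3, h23⟩, hrest⟩ := hp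
  by_cases hi : i ∈ range e
  · obtain ⟨k, rfl⟩ := hi
    fin_cases k <;> simp only [Fin.zero_eta, Fin.mk_one, Fin.reduceFinMk] <;>
      constructor <;> linarith
  · exact hrest i hi

theorem convex_triangleBody : Convex ℝ (triangleBody e) := by
  rintro p ⟨⟨hp0, hp1, hp01⟩, ⟨hp2, hp3, hp23⟩, hp⟩
    q ⟨⟨hq0, hq1, hq01⟩, ⟨hq2, hq3, hq23⟩, hq⟩ a b ha hb hab
  simp only [triangleBody, mem_ofPred_eq, PiLp.add_apply, PiLp.smul_apply, smul_eq_mul, mem_Icc]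
  refine ⟨⟨by positivity, by positivity, by nlinarith⟩,
    ⟨by positivity, by positivity, by nlinarith⟩, fun i hi => ?_⟩
  obtain ⟨hpi0, hpi1⟩ := hp i hi
  obtain ⟨hqi0, hqi1⟩ := hq i hi
  exact ⟨by positivity, by nlinarith⟩

theorem isClosed_triangleBody : IsClosed (triangleBody e) := by
  have hc : ∀ i, Continuous fun p : EuclideanSpace ℝ ι => p i := PiLp.continuous_apply 2 _
  simp only [triangleBody, ofPred_and, ofPred_forall]
  refine .inter (.inter ?_ (.inter ?_ ?_)) (.inter (.inter ?_ (.inter ?_ ?_))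
    (isClosed_iInter fun i => isClosed_iInter fun _ => isClosed_Icc.preimage (hc i)))
  all_goals exact isClosed_le (by fun_prop) (by fun_prop)

theorem isCompact_triangleBody [Fintype ι] : IsCompact (triangleBody e) := by
  have hcube : IsCompact (WithLp.toLp 2 '' Icc (0 : ι → ℝ) 1) :=
    isCompact_Icc.image (PiLp.continuous_toLp 2 _)
  refine hcube.of_isClosed_subset (isClosed_triangleBody e) fun p hp => ⟨p.ofLp, ?_, rfl⟩
  exact ⟨fun i => (coord_mem_Icc_of_mem_triangleBody e hp i).1,
    fun i => (coord_mem_Icc_of_mem_triangleBody e hp i).2⟩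

theorem interior_triangleBody_nonempty [Fintype ι] : (interior (triangleBody e)).Nonempty := by
  set U := {p : EuclideanSpace ℝ ι | ∀ i, p i ∈ Ioo 0 (1 / 2)}
  have hU : IsOpen U := by
    simp only [U, ofPred_forall]
    exact isOpen_iInter_of_finite fun i => isOpen_Ioo.preimage (PiLp.continuous_apply 2 _ i)
  have hUsub : U ⊆ triangleBody e := by
    intro p hp
    have hpos i := (hp i).1
    have hlt i := (hp i).2
    exact ⟨⟨(hpos _).le, (hpos _).le, by linarith [hlt (e 0), hlt (e 1)]⟩,
      ⟨(hpos _).le, (hpos _).le, by linarith [hlt (e 2), hlt (e 3)]⟩,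
      fun i _ => ⟨(hpos i).le, by linarith [hlt i]⟩⟩
  exact ⟨WithLp.toLp 2 fun _ => 1 / 4, mem_interior.2 ⟨U, hUsub, hU, fun i => by norm_num⟩⟩

theorem isConvexBody_triangleBody [Fintype ι] : IsConvexBody (triangleBody e) :=
  ⟨⟨0, zero_mem_triangleBody e⟩, isCompact_triangleBody e, convex_triangleBody e,
    interior_triangleBody_nonempty e⟩

theorem isProductAlong_triangleBody [DecidableEq ι] :
    IsProductAlong {e 2, e 3} (triangleBody e) := by
  rintro a ⟨ha01, -, ha⟩ b ⟨-, hb23, -⟩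
  refine ⟨by simpa using ha01, by simpa using hb23, fun i hi => ?_⟩
  have hi2 : i ≠ e 2 := fun h => hi ⟨2, h.symm⟩
  have hi3 : i ≠ e 3 := fun h => hi ⟨3, h.symm⟩
  simpa [hi2, hi3] using ha i hi

theorem image_negOn_triangleBody_ne_add [Fintype ι] [DecidableEq ι] (t : EuclideanSpace ℝ ι) :
    negOn {e 2, e 3} '' triangleBody e ≠ (· + t) '' triangleBody e := by
  intro h
  have h0 : (0 : EuclideanSpace ℝ ι) ∈ (· + t) '' triangleBody e :=
    h ▸ mem_image_negOn.2 (by simpa using zero_mem_triangleBody e)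
  have h2 : single (e 2) 1 + t ∈ negOn {e 2, e 3} '' triangleBody e :=
    h ▸ mem_image_of_mem _ (single_mem_triangleBody e 2)
  have h3 : single (e 3) 1 + t ∈ negOn {e 2, e 3} '' triangleBody e :=
    h ▸ mem_image_of_mem _ (single_mem_triangleBody e 3)
  rw [mem_image_add_right_iff_sub_mem] at h0
  rw [mem_image_negOn] at h2 h3
  have hsum : -t (e 2) + -t (e 3) ≤ 1 := by simpa using h0.2.1.2.2
  have ht2 : t (e 2) ≤ -1 := by simpa using h2.2.1.1
  have ht3 : t (e 3) ≤ -1 := by simpa using h3.2.1.2.1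
  linarith

theorem image_negOn_triangleBody_ne_neg_add [Fintype ι] [DecidableEq ι]
    (t : EuclideanSpace ℝ ι) :
    negOn {e 2, e 3} '' triangleBody e ≠ (fun p => -p + t) '' triangleBody e := by
  intro h
  have h0 : (0 : EuclideanSpace ℝ ι) ∈ (fun p => -p + t) '' triangleBody e :=
    h ▸ mem_image_negOn.2 (by simpa using zero_mem_triangleBody e)
  have h1 : single (e 0) 1 ∈ (fun p => -p + t) '' triangleBody e := by
    rw [← h, mem_image_negOn, negOn_single_of_notMem (by simp)]
    exact single_mem_triangleBody e 0
  have h2 : single (e 1) 1 ∈ (fun p => -p + t) '' triangleBody e := by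
    rw [← h, mem_image_negOn, negOn_single_of_notMem (by simp)]
    exact single_mem_triangleBody e 1
  rw [mem_image_neg_add_iff_sub_mem] at h0 h1 h2
  have hsum : t (e 0) + t (e 1) ≤ 1 := by simpa using h0.1.2.2
  have ht0 : 0 ≤ t (e 0) - 1 := by simpa using h1.1.1
  have ht1 : 0 ≤ t (e 1) - 1 := by simpa using h2.1.2.1
  linarith

end TriangleBody

end EuclideanSpace

open EuclideanSpace

/-- Theorem 6.1(II): in every dimension `n ≥ 4`, for any `φ` invariant under all isometric
bijections of `ℝⁿ`, there exist convex bodies with equal `φ`-covariograms which are neither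
translates nor reflected translates of each other. -/
theorem exists_nondetermined_by_isometry_invariant_covariogram
    (n : ℕ) (hn : 4 ≤ n)
    (φ : Set (EuclideanSpace ℝ (Fin n)) → ℝ)
    (hφ : ∀ (T : EuclideanSpace ℝ (Fin n) ≃ᵢ EuclideanSpace ℝ (Fin n))
          (A : Set (EuclideanSpace ℝ (Fin n))), φ (T '' A) = φ A) :
    ∃ A A' : Set (EuclideanSpace ℝ (Fin n)),
      A.Nonempty ∧ IsCompact A ∧ Convex ℝ A ∧ (interior A).Nonempty ∧
      A'.Nonempty ∧ IsCompact A' ∧ Convex ℝ A' ∧ (interior A').Nonempty ∧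
      (∀ x : EuclideanSpace ℝ (Fin n),
        φ (A ∩ ((· + x) '' A)) = φ (A' ∩ ((· + x) '' A'))) ∧
      (∀ t : EuclideanSpace ℝ (Fin n), A' ≠ (· + t) '' A ∧ A' ≠ (fun p => -p + t) '' A) := by
  set e := Fin.castLEEmb hn
  have hA := isConvexBody_triangleBody e
  obtain ⟨hA'₁, hA'₂, hA'₃, hA'₄⟩ := hA.image (negOn {e 2, e 3}).toContinuousLinearEquiv
  obtain ⟨hA₁, hA₂, hA₃, hA₄⟩ := hA
  refine ⟨triangleBody e, negOn {e 2, e 3} '' triangleBody e, hA₁, hA₂, hA₃, hA₄,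
    hA'₁, hA'₂, hA'₃, hA'₄, fun x => ?_,
    fun t => ⟨image_negOn_triangleBody_ne_add e t, image_negOn_triangleBody_ne_neg_add e t⟩⟩
  rw [← image_reflectOn_inter_add (isProductAlong_triangleBody e) x, hφ]
end

section
/- Let f : ℝ → ℝ be convex on the interval [0,1] with f(0) = 0, and suppose f has right derivative d ≥ 0 at 0 (i.e. f has derivative d at 0 within [0,∞)). For 0 < s ≤ 1 let b(s) denote the Euclidean arc length of the graph of f over [0,s], i.e. the total variation of the curve t ↦ (t, f(t)) ∈ ℝ² (with the Euclidean norm) on [0,s]. Then b(s) = s·√(1 + d²) + o(s) as s → 0⁺; that is, (b(s) − s·√(1 + d²))/s tends to 0 as s tends to 0 from the right. (Lemma 4.3 for the Euclidean norm: near 0 the arc length of a convex graph is asymptotic to the length of the tangent segment.) -/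
/-!
On `[0, s]` every chord of a convex `f` has slope between the right derivative `d` at `0` and the
slope of `f` on `[s, 2s]`, and the latter tends to `d`. So on `[0, s]` the graph is Lipschitz in
`t` with constant `√(1 + d²) + o(1)`, which bounds the arc length from above, while the chord from
`(0, f 0)` to `(s, f s)` bounds it from below by `s √(1 + d²) + o(s)`.
-/

open Set Filter
open scoped Topology NNReal

noncomputable def graphCurve (f : ℝ → ℝ) (t : ℝ) : EuclideanSpace ℝ (Fin 2) :=
  (EuclideanSpace.equiv (Fin 2) ℝ).symm ![t, f t]

section GraphCurve

variable {f : ℝ → ℝ}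

lemma dist_graphCurve (x y : ℝ) :
    dist (graphCurve f x) (graphCurve f y) = √((x - y) ^ 2 + (f x - f y) ^ 2) := by
  simp [graphCurve, EuclideanSpace.dist_eq, Fin.sum_univ_two, Real.dist_eq, sq_abs]

lemma dist_graphCurve_eq_mul_sqrt_slope {x y : ℝ} (hxy : x < y) :
    dist (graphCurve f x) (graphCurve f y) = (y - x) * √(1 + slope f x y ^ 2) := by
  have hyx : y - x ≠ 0 := sub_ne_zero.2 hxy.ne'
  have : (x - y) ^ 2 + (f x - f y) ^ 2 = (y - x) ^ 2 * (1 + slope f x y ^ 2) := by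
    rw [slope_def_field]
    field_simp
    ring
  rw [dist_graphCurve, this, Real.sqrt_mul (sq_nonneg _), Real.sqrt_sq (sub_nonneg.2 hxy.le)]

lemma lipschitzOnWith_graphCurve {K : ℝ≥0} {S : Set ℝ} (hf : LipschitzOnWith K f S) :
    LipschitzOnWith (NNReal.sqrt (1 + K ^ 2)) (graphCurve f) S := by
  refine LipschitzOnWith.of_dist_le_mul fun x hx y hy => ?_
  have hfxy : |f x - f y| ≤ K * |x - y| := by
    simpa only [Real.dist_eq] using hf.dist_le_mul x hx y hy
  have hsq : (f x - f y) ^ 2 ≤ K ^ 2 * (x - y) ^ 2 := by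
    rw [← sq_abs (f x - f y), ← sq_abs (x - y), ← mul_pow]
    exact pow_le_pow_left₀ (abs_nonneg _) hfxy 2
  calc dist (graphCurve f x) (graphCurve f y) = √((x - y) ^ 2 + (f x - f y) ^ 2) :=
        dist_graphCurve x y
    _ ≤ √((1 + K ^ 2) * (x - y) ^ 2) := Real.sqrt_le_sqrt (by linarith)
    _ = NNReal.sqrt (1 + K ^ 2) * dist x y := by
        rw [Real.sqrt_mul (by positivity), Real.sqrt_sq_eq_abs, Real.dist_eq, Real.coe_sqrt]
        push_cast
        rfl

lemma eVariationOn_graphCurve_Icc_le {K : ℝ≥0} {a b : ℝ}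
    (hf : LipschitzOnWith K f (Icc a b)) :
    eVariationOn (graphCurve f) (Icc a b) ≤ ENNReal.ofReal (√(1 + K ^ 2) * (b - a)) :=
  calc eVariationOn (graphCurve f ∘ id) (Icc a b)
      ≤ NNReal.sqrt (1 + K ^ 2) * eVariationOn id (Icc a b) :=
        (lipschitzOnWith_graphCurve hf).comp_eVariationOn_le (mapsTo_id _)
    _ = ENNReal.ofReal (√(1 + K ^ 2) * (b - a)) := by
        rw [eVariationOn_id_Icc, ENNReal.ofReal_mul (by positivity), ← ENNReal.ofReal_coe_nnreal,
          Real.coe_sqrt]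
        push_cast
        rfl

lemma mul_sqrt_slope_le_toReal_eVariationOn_graphCurve {a b : ℝ} (hab : a < b)
    (hfin : eVariationOn (graphCurve f) (Icc a b) ≠ ⊤) :
    (b - a) * √(1 + slope f a b ^ 2) ≤ (eVariationOn (graphCurve f) (Icc a b)).toReal := by
  rw [← dist_graphCurve_eq_mul_sqrt_slope hab, dist_edist]
  exact ENNReal.toReal_mono hfin
    (eVariationOn.edist_le _ (left_mem_Icc.2 hab.le) (right_mem_Icc.2 hab.le))

end GraphCurve

section Convex

variable {f : ℝ → ℝ} {S : Set ℝ} {a b c d : ℝ}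

lemma ConvexOn.slope_mem_Icc_of_hasDerivWithinAt (hf : ConvexOn ℝ S f) (ha : a ∈ S) (hc : c ∈ S)
    (hd : HasDerivWithinAt f d (Ioi a) a) {x y : ℝ} (hax : a ≤ x) (hxy : x < y) (hyb : y ≤ b)
    (hbc : b < c) : slope f x y ∈ Icc d (slope f b c) := by
  have mem : ∀ z ∈ Icc a c, z ∈ S := hf.1.ordConnected.out ha hc
  have hxS := mem x ⟨hax, by linarith⟩
  have hyS := mem y ⟨by linarith, by linarith⟩
  have hbS := mem b ⟨by linarith, hbc.le⟩
  constructor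
  · calc d ≤ slope f a y := hf.le_slope_of_hasDerivWithinAt_Ioi ha hyS (by linarith) hd
      _ ≤ slope f x y := by
          rw [slope_comm, slope_comm f x]
          exact hf.slope_mono hyS ⟨ha, (by linarith : a < y).ne⟩ ⟨hxS, hxy.ne⟩ hax
  · calc slope f x y ≤ slope f x c :=
          hf.slope_mono hxS ⟨hyS, hxy.ne'⟩ ⟨hc, (by linarith : x < c).ne'⟩ (by linarith)
      _ ≤ slope f b c := by
          rw [slope_comm, slope_comm f b]
          exact hf.slope_mono hc ⟨hxS, (by linarith : x < c).ne⟩ ⟨hbS, hbc.ne⟩ (by linarith)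

lemma ConvexOn.lipschitzOnWith_Icc_of_hasDerivWithinAt (hf : ConvexOn ℝ S f) (ha : a ∈ S)
    (hc : c ∈ S) (hd : HasDerivWithinAt f d (Ioi a) a) (hbc : b < c) :
    LipschitzOnWith (max |d| |slope f b c|).toNNReal f (Icc a b) := by
  refine LipschitzOnWith.of_dist_le_mul fun x hx y hy => ?_
  wlog hxy : x < y generalizing x y
  · rcases (not_lt.1 hxy).eq_or_lt with rfl | hyx
    · simp
    · simpa only [dist_comm] using this y hy x hx hyx
  have hslope := hf.slope_mem_Icc_of_hasDerivWithinAt ha hc hd hx.1 hxy hy.2 hbc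
  have hfxy : f y - f x = slope f x y * (y - x) := by
    rw [slope_def_field]
    field_simp [sub_ne_zero.2 hxy.ne']
  rw [Real.coe_toNNReal _ (by positivity), dist_comm, dist_comm x, Real.dist_eq, Real.dist_eq,
    hfxy, abs_mul, abs_of_pos (sub_pos.2 hxy)]
  exact mul_le_mul_of_nonneg_right (abs_le_max_abs_abs hslope.1 hslope.2) (sub_pos.2 hxy).le

lemma ConvexOn.toReal_eVariationOn_graphCurve_mem_Icc (hf : ConvexOn ℝ S f) (ha : a ∈ S)
    (hc : c ∈ S) (hd : HasDerivWithinAt f d (Ioi a) a) (hab : a < b) (hbc : b < c) :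
    (eVariationOn (graphCurve f) (Icc a b)).toReal ∈
      Icc ((b - a) * √(1 + slope f a b ^ 2)) ((b - a) * √(1 + max |d| |slope f b c| ^ 2)) := by
  have hvar :=
    eVariationOn_graphCurve_Icc_le (hf.lipschitzOnWith_Icc_of_hasDerivWithinAt ha hc hd hbc)
  rw [Real.coe_toNNReal _ (by positivity), mul_comm] at hvar
  exact ⟨mul_sqrt_slope_le_toReal_eVariationOn_graphCurve hab
      (ne_top_of_le_ne_top ENNReal.ofReal_ne_top hvar),
    ENNReal.toReal_le_of_le_ofReal (mul_nonneg (sub_pos.2 hab).le (Real.sqrt_nonneg _)) hvar⟩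

end Convex

lemma tendsto_slope_self_two_mul {f : ℝ → ℝ} {d : ℝ} (hd : HasDerivWithinAt f d (Ioi 0) 0) :
    Tendsto (fun s => slope f s (2 * s)) (𝓝[>] 0) (𝓝 d) := by
  have h := (hasDerivWithinAt_iff_tendsto_slope' self_notMem_Ioi).1 hd
  have h2 : Tendsto (fun s : ℝ => 2 * s) (𝓝[>] 0) (𝓝[>] 0) := by
    simpa using Filter.TendstoNhdsWithinIoi.const_mul two_pos (tendsto_id (x := 𝓝[>] (0 : ℝ)))
  -- `slope f s (2 * s) = 2 * slope f 0 (2 * s) - slope f 0 s`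
  have hlim := ((h.comp h2).const_mul 2).sub h
  rw [show 2 * d - d = d by ring] at hlim
  refine hlim.congr' (eventually_mem_nhdsWithin.mono fun s (hs : 0 < s) => ?_)
  simp only [Function.comp_apply, slope_def_field]
  field_simp [hs.ne']
  ring

theorem arclength_graph_convex_asymptotic_general
    (f : ℝ → ℝ) (d : ℝ)
    (hconv : ConvexOn ℝ (Set.Icc (0 : ℝ) 1) f)
    (hd : HasDerivWithinAt f d (Set.Ici (0 : ℝ)) 0)
    (b : ℝ → ℝ)
    (hb : ∀ s, b s =
      (eVariationOn (fun t : ℝ =>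
          (EuclideanSpace.equiv (Fin 2) ℝ).symm ![t, f t]) (Set.Icc 0 s)).toReal) :
    Tendsto (fun s => (b s - s * Real.sqrt (1 + d ^ 2)) / s) (𝓝[>] (0 : ℝ)) (𝓝 0) := by
  have hd' : HasDerivWithinAt f d (Ioi 0) 0 := hd.mono Ioi_subset_Ici_self
  replace hb : ∀ s, b s = (eVariationOn (graphCurve f) (Icc 0 s)).toReal := hb
  have hbounds : ∀ᶠ s in 𝓝[>] (0 : ℝ),
      b s / s ∈ Icc √(1 + slope f 0 s ^ 2) √(1 + max |d| |slope f s (2 * s)| ^ 2) := by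
    filter_upwards [Ioc_mem_nhdsGT one_half_pos] with s ⟨hs0, hs2⟩
    have h := hconv.toReal_eVariationOn_graphCurve_mem_Icc (c := 2 * s)
      (left_mem_Icc.2 zero_le_one) ⟨by linarith, by linarith⟩ hd' hs0 (by linarith)
    rw [← hb, sub_zero] at h
    exact ⟨(le_div_iff₀' hs0).2 h.1, (div_le_iff₀' hs0).2 h.2⟩
  have hlim_lower : Tendsto (fun s => √(1 + slope f 0 s ^ 2)) (𝓝[>] 0) (𝓝 √(1 + d ^ 2)) :=
    ((((hasDerivWithinAt_iff_tendsto_slope' self_notMem_Ioi).1 hd').pow 2).const_add 1).sqrt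
  have hlim_upper :
      Tendsto (fun s => √(1 + max |d| |slope f s (2 * s)| ^ 2)) (𝓝[>] 0) (𝓝 √(1 + d ^ 2)) := by
    simpa using ((((tendsto_const_nhds (x := |d|)).max
      (tendsto_slope_self_two_mul hd').abs).pow 2).const_add 1).sqrt
  have hratio : Tendsto (fun s => b s / s) (𝓝[>] 0) (𝓝 √(1 + d ^ 2)) :=
    tendsto_of_tendsto_of_tendsto_of_le_of_le' hlim_lower hlim_upper
      (hbounds.mono fun _ h => h.1) (hbounds.mono fun _ h => h.2)
  have hdiff := hratio.sub_const √(1 + d ^ 2)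
  rw [sub_self] at hdiff
  refine hdiff.congr' ?_
  filter_upwards [self_mem_nhdsWithin] with s (hs : 0 < s)
  rw [sub_div, mul_div_cancel_left₀ _ hs.ne']

/-- Lemma 4.3 for the Euclidean norm: if `f` is convex on `[0,1]`, `f 0 = 0` and `f` has
right derivative `d ≥ 0` at `0`, then the Euclidean arc length `b s` of the graph of `f`
over `[0,s]` satisfies `b s = s·√(1 + d²) + o(s)` as `s → 0⁺`. -/
theorem arclength_graph_convex_asymptotic
    (f : ℝ → ℝ) (d : ℝ)
    (hconv : ConvexOn ℝ (Set.Icc (0 : ℝ) 1) f)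
    (hf0 : f 0 = 0)
    (hd : HasDerivWithinAt f d (Set.Ici (0 : ℝ)) 0)
    (hd0 : 0 ≤ d)
    (b : ℝ → ℝ)
    (hb : ∀ s, b s =
      (eVariationOn (fun t : ℝ =>
          (EuclideanSpace.equiv (Fin 2) ℝ).symm ![t, f t]) (Set.Icc 0 s)).toReal) :
    Tendsto (fun s => (b s - s * Real.sqrt (1 + d ^ 2)) / s) (𝓝[>] (0 : ℝ)) (𝓝 0) :=
  arclength_graph_convex_asymptotic_general f d hconv hd b hb
end
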